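/- arXiv:2310.09271 — 14 statements merged into one kernel-verified Lean document; each statement's English description precedes it below -/
import Mathlib

section
/- For every integer n ≥ 1 there exists an instance with n bidders in which the optimal integral liquid welfare is at most a 1/n fraction of the optimal fractional liquid welfare: namely, in the instance with n bidders and a single query where B_i = 1 and v_{i,1} = n for every bidder i, one has n · I-OPT ≤ OPT (indeed OPT = n while I-OPT = 1). -/
open Finset
open scoped Classical

noncomputable section

/-- An allocation: each entry in `[0,1]`, and each query allocated total probability at most 1. -/
def IsAlloc {n q : ℕ} (π : Fin n → Fin q → ℝ) : Prop :=
  (∀ i j, 0 ≤ π i j) ∧ (∀ i j, π i j ≤ 1) ∧ ∀ j, ∑ i, π i j ≤ 1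

/-- An integral (deterministic) allocation. -/
def IsIntegralAlloc {n q : ℕ} (π : Fin n → Fin q → ℝ) : Prop :=
  IsAlloc π ∧ ∀ i j, π i j = 0 ∨ π i j = 1

/-- Liquid welfare of an allocation. -/
def allocLW {n q : ℕ} (B : Fin n → ℝ) (v π : Fin n → Fin q → ℝ) : ℝ :=
  ∑ i, min (B i) (∑ j, π i j * v i j)

/-- In the instance with `n` bidders and a single query, where every bidder has
budget 1 and value `n` for the query, the optimal integral liquid welfare `IOPT` and the optimal
fractional liquid welfare `OPT` satisfy `n * IOPT ≤ OPT`; indeed `OPT = n` and `IOPT = 1`. -/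
theorem stmt0 (n : ℕ) (hn : 1 ≤ n) (OPT IOPT : ℝ)
    (hOPT : IsGreatest {w : ℝ | ∃ π : Fin n → Fin 1 → ℝ,
        IsAlloc π ∧ w = allocLW (fun _ => 1) (fun _ _ => (n : ℝ)) π} OPT)
    (hIOPT : IsGreatest {w : ℝ | ∃ π : Fin n → Fin 1 → ℝ,
        IsIntegralAlloc π ∧ w = allocLW (fun _ => 1) (fun _ _ => (n : ℝ)) π} IOPT) :
    (n : ℝ) * IOPT ≤ OPT ∧ OPT = (n : ℝ) ∧ IOPT = 1 := by
  have hn0 : (0:ℝ) < n := by exact_mod_cast hn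
  have hOPTeq : OPT = (n : ℝ) := by
    have hle : OPT ≤ (n:ℝ) := by
      obtain ⟨⟨π, hπ, hw⟩, -⟩ := hOPT
      rw [hw, allocLW]
      calc ∑ i : Fin n, min (1:ℝ) (∑ j, π i j * n) ≤ ∑ _i : Fin n, (1:ℝ) :=
            Finset.sum_le_sum (fun i _ => min_le_left _ _)
        _ = n := by simp
    have hge : (n:ℝ) ≤ OPT := by
      refine hOPT.2 ⟨fun _ _ => (n:ℝ)⁻¹, ⟨fun i j => by positivity,
        fun i j => by rw [inv_le_one_iff₀]; right; exact_mod_cast hn,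
        fun j => by simp [Finset.card_univ, mul_inv_cancel₀ hn0.ne']⟩, ?_⟩
      simp [allocLW, Finset.card_univ, inv_mul_cancel₀ hn0.ne', hn0.ne']
    linarith
  have hIOPTeq : IOPT = 1 := by
    have hle : IOPT ≤ 1 := by
      obtain ⟨⟨π, ⟨⟨hpos, hle1, hsum⟩, hint⟩, hw⟩, -⟩ := hIOPT
      rw [hw, allocLW]
      calc ∑ i : Fin n, min (1:ℝ) (∑ j, π i j * n) ≤ ∑ i, π i 0 := by
            refine Finset.sum_le_sum (fun i _ => ?_)
            rcases hint i 0 with h | h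
            · simp [Fin.sum_univ_one, h]
            · rw [Fin.sum_univ_one, h, one_mul]
              simp [min_le_iff]
        _ ≤ 1 := hsum 0
    have hge : (1:ℝ) ≤ IOPT := by
      refine hIOPT.2 ⟨fun i _ => if i = ⟨0, hn⟩ then 1 else 0, ⟨⟨fun i j => by positivity,
        fun i j => by dsimp only; split <;> norm_num, fun j => by simp⟩,
        fun i j => by by_cases h : i = (⟨0, hn⟩ : Fin n) <;> simp [h]⟩, ?_⟩
      rw [allocLW]
      rw [Finset.sum_eq_single (⟨0, hn⟩ : Fin n)]
      · simp; exact_mod_cast hn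
      · intro i _ hi; simp [hi]
      · simp
    linarith
  refine ⟨?_, hOPTeq, hIOPTeq⟩
  rw [hOPTeq, hIOPTeq, mul_one]
end
end

section
/- For every integer n ≥ 1 there exist an instance with n bidders, a deterministic tie-breaking rule, and an FPA equilibrium bid profile whose liquid welfare LW satisfies n · LW ≤ OPT; hence the price of anarchy of the first-price auction with both ROS and budget constraints is at least n. -/
open Finset
open scoped Classical

noncomputable section

/-- A deterministic tie-breaking / winner rule for first-price auctions:
given a bid profile, it selects on each query a bidder whose bid is maximal. -/
def IsWinnerRule {n q : ℕ} (W : (Fin n → Fin q → ℝ) → Fin q → Fin n) : Prop :=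
  ∀ (b : Fin n → Fin q → ℝ) (j : Fin q) (i : Fin n), b i j ≤ b (W b j) j

/-- The set of queries bidder `i` wins under bid profile `b`. -/
def fpaN {n q : ℕ} (W : (Fin n → Fin q → ℝ) → Fin q → Fin n)
    (b : Fin n → Fin q → ℝ) (i : Fin n) : Finset (Fin q) :=
  Finset.univ.filter fun j => W b j = i

/-- The total value bidder `i` obtains. -/
def fpaV {n q : ℕ} (v : Fin n → Fin q → ℝ) (W : (Fin n → Fin q → ℝ) → Fin q → Fin n)
    (b : Fin n → Fin q → ℝ) (i : Fin n) : ℝ :=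
  ∑ j ∈ fpaN W b i, v i j

/-- The spend (winning bid) on query `j`. -/
def fpaSpendQ {n q : ℕ} (W : (Fin n → Fin q → ℝ) → Fin q → Fin n)
    (b : Fin n → Fin q → ℝ) (j : Fin q) : ℝ :=
  b (W b j) j

/-- The total spend of bidder `i`. -/
def fpaSpendI {n q : ℕ} (W : (Fin n → Fin q → ℝ) → Fin q → Fin n)
    (b : Fin n → Fin q → ℝ) (i : Fin n) : ℝ :=
  ∑ j ∈ fpaN W b i, b i j

/-- Liquid welfare of a bid profile in FPA. -/
def fpaLW {n q : ℕ} (B : Fin n → ℝ) (v : Fin n → Fin q → ℝ)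
    (W : (Fin n → Fin q → ℝ) → Fin q → Fin n) (b : Fin n → Fin q → ℝ) : ℝ :=
  ∑ i, min (B i) (fpaV v W b i)

/-- Equilibrium of a first-price auction with ROS and budget constraints:
bids are nonnegative, each bidder satisfies their constraints, and for any deviation
of a single bidder, either the bidder's value does not increase, or a constraint is violated. -/
def IsFpaEq {n q : ℕ} (B : Fin n → ℝ) (v : Fin n → Fin q → ℝ)
    (W : (Fin n → Fin q → ℝ) → Fin q → Fin n) (b : Fin n → Fin q → ℝ) : Prop :=
  (∀ i j, 0 ≤ b i j) ∧
  (∀ i, fpaSpendI W b i ≤ min (B i) (fpaV v W b i)) ∧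
  (∀ i (b' : Fin q → ℝ), (∀ j, 0 ≤ b' j) →
    (∑ j ∈ fpaN W (Function.update b i b') i, v i j ≤ fpaV v W b i) ∨
    (min (B i) (∑ j ∈ fpaN W (Function.update b i b') i, v i j)
      < ∑ j ∈ fpaN W (Function.update b i b') i, b' j))

/-! A single query and `n` bidders, each with budget `1` and value `n` for the query. Everyone
bids `1` and ties go to bidder `0`, who wins and spends `1 = min(1, n)`, so the liquid welfare is
`1`. Any other bidder wins only by bidding more than `1`, which exceeds its budget, so this is an
equilibrium. Splitting the query equally gives every bidder value `1`, and `OPT = n`. -/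

theorem allocLW_le_sum_budget {n q : ℕ} (B : Fin n → ℝ) (v π : Fin n → Fin q → ℝ) :
    allocLW B v π ≤ ∑ i, B i :=
  sum_le_sum fun _ _ => min_le_left _ _

section UnitBids

variable {n q : ℕ} [NeZero n]

def lowestMaxBidder (c : Fin n → Fin q → ℝ) (j : Fin q) : Fin n :=
  (univ.filter fun i => ∀ k, c k j ≤ c i j).min' <| by
    obtain ⟨i, -, hi⟩ := exists_max_image univ (fun i => c i j) univ_nonempty
    exact ⟨i, by simpa using hi⟩

theorem isWinnerRule_lowestMaxBidder : IsWinnerRule (lowestMaxBidder (n := n) (q := q)) :=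
  fun c j i => (mem_filter.1 (min'_mem (univ.filter fun i => ∀ k, c k j ≤ c i j) _)).2 i

theorem lowestMaxBidder_eq_zero {c : Fin n → Fin q → ℝ} {j : Fin q} (h : ∀ k, c k j ≤ c 0 j) :
    lowestMaxBidder c j = 0 :=
  le_antisymm (min'_le _ _ (by simpa using h)) (Fin.zero_le _)

theorem fpaN_lowestMaxBidder_const (β : ℝ) (i : Fin n) :
    fpaN lowestMaxBidder (fun _ _ => β) i = if i = 0 then (univ : Finset (Fin q)) else ∅ := by
  have hW : ∀ j : Fin q, lowestMaxBidder (fun (_ : Fin n) (_ : Fin q) => β) j = 0 :=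
    fun j => lowestMaxBidder_eq_zero fun _ => le_rfl
  ext j
  by_cases hi : i = 0 <;> simp [fpaN, hW, hi, eq_comm]

theorem lt_of_lowestMaxBidder_update_eq {β : ℝ} {i : Fin n} (hi : i ≠ 0) {b' : Fin q → ℝ}
    {j : Fin q} (hwin : lowestMaxBidder (Function.update (fun _ _ => β) i b') j = i) :
    β < b' j := by
  by_contra! hle
  refine hi (hwin.symm.trans (lowestMaxBidder_eq_zero fun k => ?_))
  rcases eq_or_ne k i with rfl | hk
  · simpa [Function.update_of_ne hi.symm] using hle
  · simp [Function.update_of_ne hk, Function.update_of_ne hi.symm]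

theorem isAlloc_uniform : IsAlloc fun (_ : Fin n) (_ : Fin q) => (n : ℝ)⁻¹ := by
  have hn : (1 : ℝ) ≤ n := by exact_mod_cast NeZero.one_le
  refine ⟨fun _ _ => by positivity, fun _ _ => inv_le_one_of_one_le₀ hn, fun _ => ?_⟩
  simp [mul_inv_cancel₀ (NeZero.ne (n : ℝ))]

theorem isGreatest_allocLW_unitBudgets :
    IsGreatest {w : ℝ | ∃ π : Fin n → Fin 1 → ℝ,
      IsAlloc π ∧ w = allocLW (fun _ => 1) (fun _ _ => (n : ℝ)) π} n := by
  refine ⟨⟨_, isAlloc_uniform, ?_⟩, ?_⟩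
  · simp [allocLW, inv_mul_cancel₀ (NeZero.ne (n : ℝ))]
  · rintro _ ⟨π, -, rfl⟩
    simpa using allocLW_le_sum_budget (fun _ => 1) _ π

theorem isFpaEq_unitBids :
    IsFpaEq (fun _ => 1) (fun _ _ => (n : ℝ)) lowestMaxBidder (fun (_ : Fin n) (_ : Fin 1) => 1) := by
  have hn : (1 : ℝ) ≤ n := by exact_mod_cast NeZero.one_le
  refine ⟨fun _ _ => zero_le_one, fun i => ?_, fun i b' hb' => ?_⟩
  · by_cases hi : i = 0 <;> simp [fpaSpendI, fpaV, fpaN_lowestMaxBidder_const, hi, hn]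
  by_cases hi : i = 0
  · subst hi
    left
    simp only [fpaV, fpaN_lowestMaxBidder_const]
    exact sum_le_sum_of_subset_of_nonneg (subset_univ _) fun _ _ _ => n.cast_nonneg
  rcases (fpaN lowestMaxBidder (Function.update (fun _ _ => 1) i b') i).eq_empty_or_nonempty
    with hlose | ⟨j, hwin⟩
  · left
    simp [hlose, fpaV, fpaN_lowestMaxBidder_const, hi]
  · right
    calc min 1 _ ≤ (1 : ℝ) := min_le_left _ _
      _ < b' j := lt_of_lowestMaxBidder_update_eq hi (mem_filter.1 hwin).2
      _ ≤ _ := single_le_sum (fun k _ => hb' k) hwin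

theorem fpaLW_unitBids :
    fpaLW (fun _ => 1) (fun _ _ => (n : ℝ)) lowestMaxBidder (fun (_ : Fin n) (_ : Fin 1) => 1) = 1 := by
  have hn : (1 : ℝ) ≤ n := by exact_mod_cast NeZero.one_le
  simp [fpaLW, fpaV, fpaN_lowestMaxBidder_const, apply_ite, hn]

end UnitBids

/-- for every `n ≥ 1` there exist an instance with `n` bidders, a deterministic
tie-breaking rule and an FPA equilibrium whose liquid welfare `LW` satisfies `n * LW ≤ OPT`. -/
theorem stmt1 (n : ℕ) (hn : 1 ≤ n) :
    ∃ (q : ℕ) (B : Fin n → ℝ) (v : Fin n → Fin q → ℝ)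
      (W : (Fin n → Fin q → ℝ) → Fin q → Fin n) (b : Fin n → Fin q → ℝ) (OPT : ℝ),
      (∀ i, 0 < B i) ∧ (∀ i j, 0 ≤ v i j) ∧ IsWinnerRule W ∧ IsFpaEq B v W b ∧
      IsGreatest {w : ℝ | ∃ π : Fin n → Fin q → ℝ, IsAlloc π ∧ w = allocLW B v π} OPT ∧
      (n : ℝ) * fpaLW B v W b ≤ OPT := by
  have : NeZero n := ⟨by omega⟩
  refine ⟨1, fun _ => 1, fun _ _ => n, lowestMaxBidder, fun _ _ => 1, n, fun _ => one_pos,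
    fun _ _ => n.cast_nonneg, isWinnerRule_lowestMaxBidder, isFpaEq_unitBids,
    isGreatest_allocLW_unitBudgets, ?_⟩
  rw [fpaLW_unitBids, mul_one]
end
end

section
/- For every instance with n bidders, every deterministic tie-breaking rule, and every FPA equilibrium bid profile, the optimal fractional liquid welfare satisfies OPT ≤ n · LW; i.e., the price of anarchy of the first-price auction with both ROS and budget constraints is at most n. -/
open Finset
open scoped Classical

noncomputable section

/-- for every instance with `n` bidders, every deterministic tie-breaking rule and
every FPA equilibrium, `OPT ≤ n * LW`: the PoA of FPA with ROS and budget constraints is ≤ n. -/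
theorem stmt2 (n q : ℕ) (B : Fin n → ℝ) (v : Fin n → Fin q → ℝ)
    (hB : ∀ i, 0 < B i) (hv : ∀ i j, 0 ≤ v i j)
    (W : (Fin n → Fin q → ℝ) → Fin q → Fin n) (hW : IsWinnerRule W)
    (b : Fin n → Fin q → ℝ) (hb : IsFpaEq B v W b)
    (OPT : ℝ)
    (hOPT : IsGreatest {w : ℝ | ∃ π : Fin n → Fin q → ℝ, IsAlloc π ∧ w = allocLW B v π} OPT) :
    OPT ≤ (n : ℝ) * fpaLW B v W b := by
  obtain ⟨⟨π, hπ, hOPTeq⟩, -⟩ := hOPT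
  set LW := fpaLW B v W b with hLWdef
  have hbnn := hb.1
  have hVnn : ∀ i, 0 ≤ fpaV v W b i := fun i => Finset.sum_nonneg fun j _ => hv i j
  have hterm : ∀ i, min (B i) (fpaV v W b i) ≤ LW := by
    intro i
    exact Finset.single_le_sum (fun k _ => le_min (hB k).le (hVnn k)) (Finset.mem_univ i)
  have hspend : ∑ j, fpaSpendQ W b j ≤ LW := by
    have h1 : ∑ j, fpaSpendQ W b j = ∑ i, fpaSpendI W b i := by
      rw [← Finset.sum_fiberwise Finset.univ (fun j => W b j) (fun j => fpaSpendQ W b j)]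
      refine Finset.sum_congr rfl fun i _ => Finset.sum_congr rfl fun j hj => ?_
      simp only [fpaN, Finset.mem_filter, Finset.mem_univ, true_and] at hj
      simp only [fpaSpendQ, fpaSpendI, fpaN, hj]
    calc ∑ j, fpaSpendQ W b j = ∑ i, fpaSpendI W b i := h1
      _ ≤ ∑ i, min (B i) (fpaV v W b i) := Finset.sum_le_sum fun i _ => hb.2.1 i
      _ = LW := rfl
  have key : ∀ i, min (B i) (∑ j, v i j) ≤ LW := by
    intro i
    have hMax : min (B i) (∑ j, v i j) ≤
        max (min (B i) (fpaV v W b i)) (∑ j, fpaSpendQ W b j) := by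
      apply le_of_forall_pos_lt_add
      intro ε hε
      set ε' : ℝ := ε / (q + 1) with hε'def
      have hq1 : (0 : ℝ) < q + 1 := by positivity
      have hε' : 0 < ε' := div_pos hε hq1
      set b' : Fin q → ℝ := fun j => fpaSpendQ W b j + ε' with hb'def
      have hb'nn : ∀ j, 0 ≤ b' j := fun j => add_nonneg (hbnn _ j) hε'.le
      have hNall : fpaN W (Function.update b i b') i = Finset.univ := by
        apply Finset.eq_univ_iff_forall.mpr
        intro j
        simp only [fpaN, Finset.mem_filter, Finset.mem_univ, true_and]
        by_contra hne
        have h1 := hW (Function.update b i b') j i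
        rw [Function.update_self] at h1
        rw [Function.update_of_ne hne] at h1
        have h2 : b (W (Function.update b i b') j) j ≤ fpaSpendQ W b j := hW b j _
        have : b' j ≤ fpaSpendQ W b j := le_trans h1 h2
        simp only [hb'def] at this
        linarith
      rcases hb.2.2 i b' hb'nn with h | h
      · rw [hNall] at h
        have : min (B i) (∑ j, v i j) ≤ min (B i) (fpaV v W b i) :=
          min_le_min le_rfl h
        calc min (B i) (∑ j, v i j) ≤ min (B i) (fpaV v W b i) := this
          _ ≤ max (min (B i) (fpaV v W b i)) (∑ j, fpaSpendQ W b j) := le_max_left _ _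
          _ < _ + ε := lt_add_of_pos_right _ hε
      · rw [hNall] at h
        have hsum : ∑ j, b' j = (∑ j, fpaSpendQ W b j) + q * ε' := by
          simp [hb'def, Finset.sum_add_distrib, mul_comm]
        have hqe : (q : ℝ) * ε' ≤ ε := by
          have h1 : ((q : ℝ) + 1) * ε' = ε := by
            rw [hε'def]; field_simp
          nlinarith
        calc min (B i) (∑ j, v i j) < ∑ j, b' j := h
          _ = (∑ j, fpaSpendQ W b j) + q * ε' := hsum
          _ ≤ max (min (B i) (fpaV v W b i)) (∑ j, fpaSpendQ W b j) + ε :=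
            add_le_add (le_max_right _ _) hqe
    exact le_trans hMax (max_le (hterm i) hspend)
  have hπle : ∀ i, min (B i) (∑ j, π i j * v i j) ≤ LW := by
    intro i
    refine le_trans (min_le_min le_rfl ?_) (key i)
    exact Finset.sum_le_sum fun j _ =>
      mul_le_of_le_one_left (hv i j) (hπ.2.1 i j)
  calc OPT = allocLW B v π := hOPTeq
    _ = ∑ i, min (B i) (∑ j, π i j * v i j) := rfl
    _ ≤ ∑ _i : Fin n, LW := Finset.sum_le_sum fun i _ => hπle i
    _ = (n : ℝ) * LW := by
      simp [Finset.sum_const, mul_comm]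
end
end

section
/- For every FPA equilibrium and every allocation pi* achieving OPT, it holds that sum_{i in A_Bbar1} sum_{j not in N(i)} Spend(j) + LW(A_Bbar1) ≥ OPT(A_Bbar1). -/
/-!
If a budget-unconstrained bidder `i` could reach its budget by also winning one more query `j₀`,
then outbidding the current winning bids by an arbitrarily small amount on `N(i) ∪ {j₀}` is a
deviation that raises `i`'s value, so at equilibrium it must break `i`'s constraints. Hence
`B_i ≤ Spend(j₀) + Spend(i) ≤ ∑_{j ∉ N(i)} Spend(j) + V_i`, and `OPT_i ≤ B_i`.
-/

open Finset
open scoped Classical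

noncomputable section

section FirstPriceAuction

variable {n q : ℕ} {B : Fin n → ℝ} {v : Fin n → Fin q → ℝ}
  {W : (Fin n → Fin q → ℝ) → Fin q → Fin n} {b : Fin n → Fin q → ℝ}

lemma mem_fpaN_update_of_fpaSpendQ_lt (hW : IsWinnerRule W) {i : Fin n} {b' : Fin q → ℝ}
    {j : Fin q} (hj : fpaSpendQ W b j < b' j) : j ∈ fpaN W (Function.update b i b') i := by
  simp only [fpaN, mem_filter, mem_univ, true_and]
  by_contra hne
  have hmax := hW (Function.update b i b') j i
  rw [Function.update_self, Function.update_of_ne hne] at hmax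
  exact (hmax.trans (hW b j _)).not_gt hj

lemma sum_fpaSpendQ_fpaN (i : Fin n) :
    ∑ j ∈ fpaN W b i, fpaSpendQ W b j = fpaSpendI W b i :=
  sum_congr rfl fun j hj => by
    rw [fpaSpendQ, (mem_filter.mp hj).2]

namespace IsFpaEq

lemma fpaSpendQ_nonneg (hb : IsFpaEq B v W b) (j : Fin q) : 0 ≤ fpaSpendQ W b j :=
  hb.1 _ _

lemma min_le_sum_fpaSpendQ (hv : ∀ i j, 0 ≤ v i j) (hW : IsWinnerRule W)
    (hb : IsFpaEq B v W b) {i : Fin n} {T : Finset (Fin q)}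
    (hT : fpaV v W b i < ∑ j ∈ T, v i j) :
    min (B i) (∑ j ∈ T, v i j) ≤ ∑ j ∈ T, fpaSpendQ W b j := by
  refine le_of_forall_pos_lt_add fun ε hε => ?_
  set δ := ε / (#T + 1)
  have hδ : 0 < δ := by positivity
  have hcardδ : #T * δ < ε := by
    calc (#T : ℝ) * δ < (#T + 1) * δ := by linarith
      _ = ε := mul_div_cancel₀ ε (by positivity)
  set b' : Fin q → ℝ := fun j => if j ∈ T then fpaSpendQ W b j + δ else 0
  have hb' : ∀ j, 0 ≤ b' j := fun j => by
    simp only [b']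
    split_ifs
    · linarith [hb.fpaSpendQ_nonneg j]
    · exact le_rfl
  set N' := fpaN W (Function.update b i b') i
  have hTN' : T ⊆ N' := fun j hj =>
    mem_fpaN_update_of_fpaSpendQ_lt hW (by simp only [b', if_pos hj]; linarith)
  have hvalue : ∑ j ∈ T, v i j ≤ ∑ j ∈ N', v i j :=
    sum_le_sum_of_subset_of_nonneg hTN' fun j _ _ => hv i j
  have hcost : ∑ j ∈ N', b' j ≤ ∑ j ∈ T, fpaSpendQ W b j + #T * δ :=
    calc ∑ j ∈ N', b' j ≤ ∑ j, b' j :=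
          sum_le_sum_of_subset_of_nonneg (subset_univ _) fun j _ _ => hb' j
      _ = ∑ j ∈ T, (fpaSpendQ W b j + δ) := by
          rw [sum_ite_mem, univ_inter]
      _ = ∑ j ∈ T, fpaSpendQ W b j + #T * δ := by
          rw [sum_add_distrib, sum_const, nsmul_eq_mul]
  rcases hb.2.2 i b' hb' with hnogain | hviolate
  · exact absurd (hT.trans_le (hvalue.trans hnogain)) (lt_irrefl _)
  · calc min (B i) (∑ j ∈ T, v i j) ≤ min (B i) (∑ j ∈ N', v i j) := min_le_min_left _ hvalue
      _ < ∑ j ∈ N', b' j := hviolate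
      _ < ∑ j ∈ T, fpaSpendQ W b j + ε := by linarith

lemma budget_le_sum_fpaSpendQ_add_fpaV (hv : ∀ i j, 0 ≤ v i j) (hW : IsWinnerRule W)
    (hb : IsFpaEq B v W b) {i : Fin n} (hVi : fpaV v W b i < B i)
    {j₀ : Fin q} (hj₀ : W b j₀ ≠ i) (hBj₀ : B i ≤ v i j₀ + fpaV v W b i) :
    B i ≤ (∑ j ∈ univ.filter (fun j => W b j ≠ i), fpaSpendQ W b j) + fpaV v W b i := by
  have hj₀N : j₀ ∉ fpaN W b i := by simp [fpaN, hj₀]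
  have hvalue : ∑ j ∈ insert j₀ (fpaN W b i), v i j = v i j₀ + fpaV v W b i :=
    sum_insert hj₀N
  have hbundle := hb.min_le_sum_fpaSpendQ hv hW (T := insert j₀ (fpaN W b i))
    (by rw [hvalue]; linarith)
  rw [hvalue, min_eq_left hBj₀, sum_insert hj₀N, sum_fpaSpendQ_fpaN] at hbundle
  have hj₀spend : fpaSpendQ W b j₀ ≤ ∑ j ∈ univ.filter (fun j => W b j ≠ i), fpaSpendQ W b j :=
    single_le_sum (fun j _ => hb.fpaSpendQ_nonneg j) (by simp [hj₀])
  have hspend : fpaSpendI W b i ≤ fpaV v W b i := (hb.2.1 i).trans (min_le_right _ _)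
  linarith

end IsFpaEq

end FirstPriceAuction

theorem stmt3_general (n q : ℕ) (B : Fin n → ℝ) (v : Fin n → Fin q → ℝ)
    (hv : ∀ i j, 0 ≤ v i j)
    (W : (Fin n → Fin q → ℝ) → Fin q → Fin n) (hW : IsWinnerRule W)
    (b : Fin n → Fin q → ℝ) (hb : IsFpaEq B v W b)
    (πs : Fin n → Fin q → ℝ) :
    ∑ i ∈ Finset.univ.filter (fun i : Fin n => fpaV v W b i < B i ∧
        ∃ j, W b j ≠ i ∧ B i ≤ v i j + fpaV v W b i),
        ((∑ j ∈ Finset.univ.filter (fun j : Fin q => W b j ≠ i), fpaSpendQ W b j)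
          + min (B i) (fpaV v W b i))
      ≥ ∑ i ∈ Finset.univ.filter (fun i : Fin n => fpaV v W b i < B i ∧
          ∃ j, W b j ≠ i ∧ B i ≤ v i j + fpaV v W b i),
          min (B i) (∑ j, πs i j * v i j) := by
  refine sum_le_sum fun i hi => ?_
  obtain ⟨hVi, j₀, hj₀, hBj₀⟩ := (mem_filter.mp hi).2
  rw [min_eq_right hVi.le]
  exact (min_le_left _ _).trans (hb.budget_le_sum_fpaSpendQ_add_fpaV hv hW hVi hj₀ hBj₀)

/-- for every FPA equilibrium and optimal (fractional) allocation `πs`,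
`∑_{i ∈ A_Bbar1} ∑_{j ∉ N(i)} Spend(j) + LW(A_Bbar1) ≥ OPT(A_Bbar1)`. -/
theorem stmt3 (n q : ℕ) (B : Fin n → ℝ) (v : Fin n → Fin q → ℝ)
    (hB : ∀ i, 0 < B i) (hv : ∀ i j, 0 ≤ v i j)
    (W : (Fin n → Fin q → ℝ) → Fin q → Fin n) (hW : IsWinnerRule W)
    (b : Fin n → Fin q → ℝ) (hb : IsFpaEq B v W b)
    (πs : Fin n → Fin q → ℝ) (hπ : IsAlloc πs)
    (hopt : ∀ π : Fin n → Fin q → ℝ, IsAlloc π → allocLW B v π ≤ allocLW B v πs) :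
    ∑ i ∈ Finset.univ.filter (fun i : Fin n => fpaV v W b i < B i ∧
        ∃ j, W b j ≠ i ∧ B i ≤ v i j + fpaV v W b i),
        ((∑ j ∈ Finset.univ.filter (fun j : Fin q => W b j ≠ i), fpaSpendQ W b j)
          + min (B i) (fpaV v W b i))
      ≥ ∑ i ∈ Finset.univ.filter (fun i : Fin n => fpaV v W b i < B i ∧
          ∃ j, W b j ≠ i ∧ B i ≤ v i j + fpaV v W b i),
          min (B i) (∑ j, πs i j * v i j) :=
  stmt3_general n q B v hv W hW b hb πs
end
end

section
/- For every FPA equilibrium and every allocation pi* achieving OPT, it holds that sum_{i in A_Bbar0} sum_{j not in N(i)} Spend(j) + LW(A_Bbar0) ≥ OPT(A_Bbar0). -/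
open Finset
open scoped Classical

noncomputable section

/-- Key lemma: a bidder in `A_Bbar0` values every query it does not win at most the
winning bid on that query. -/
lemma key_le (n q : ℕ) (B : Fin n → ℝ) (v : Fin n → Fin q → ℝ)
    (hv : ∀ i j, 0 ≤ v i j)
    (W : (Fin n → Fin q → ℝ) → Fin q → Fin n) (hW : IsWinnerRule W)
    (b : Fin n → Fin q → ℝ) (hb : IsFpaEq B v W b)
    (i : Fin n)
    (hA0 : ∀ j, W b j ≠ i → v i j + fpaV v W b i < B i)
    (j : Fin q) (hj : W b j ≠ i) : v i j ≤ fpaSpendQ W b j := by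
  by_contra h
  push_neg at h
  set s := fpaSpendQ W b j with hs
  have hs0 : 0 ≤ s := hb.1 _ _
  have hd : 0 < v i j - s := by linarith
  set ε : ℝ := (v i j - s) / (2 * (q + 1)) with hε
  have hεpos : 0 < ε := by
    apply div_pos hd; positivity
  set b' : Fin q → ℝ := fun j' =>
    if j' = j then (s + v i j) / 2 else if W b j' = i then b i j' + ε else 0 with hb'
  have hb'0 : ∀ j', 0 ≤ b' j' := by
    intro j'
    simp only [hb']
    split_ifs
    · linarith
    · have := hb.1 i j'; linarith
    · exact le_refl 0
  have hc : ∀ k, k ≠ i → Function.update b i b' k = b k :=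
    fun k hk => Function.update_of_ne hk _ _
  have hci : Function.update b i b' i = b' := Function.update_self _ _ _
  -- i wins j and all queries it won before, under the deviation
  have hwin : ∀ j', (W b j' = i ∨ j' = j) → W (Function.update b i b') j' = i := by
    intro j' hj'
    by_contra hk
    have h1 : (Function.update b i b') i j' ≤
        (Function.update b i b') (W (Function.update b i b') j') j' := hW _ j' i
    rw [hci, hc _ hk] at h1
    have hle : b (W (Function.update b i b') j') j' ≤ b (W b j') j' := hW b j' _
    rcases hj' with hj1 | hj1
    · have hjne : j' ≠ j := by
        intro hh; rw [hh] at hj1; exact hj hj1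
      have : b' j' = b i j' + ε := by simp only [hb']; rw [if_neg hjne, if_pos hj1]
      rw [this] at h1
      rw [hj1] at hle
      linarith
    · subst hj1
      have : b' j' = (s + v i j') / 2 := by simp only [hb', if_pos rfl]
      rw [this] at h1
      have : b (W (Function.update b i b') j') j' ≤ s := hle
      linarith
  have hNsub : fpaN W b i ⊆ fpaN W (Function.update b i b') i := by
    intro j' hj'
    simp only [fpaN, Finset.mem_filter, Finset.mem_univ, true_and] at hj' ⊢
    exact hwin j' (Or.inl hj')
  have hjmem : j ∈ fpaN W (Function.update b i b') i := by
    simp only [fpaN, Finset.mem_filter, Finset.mem_univ, true_and]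
    exact hwin j (Or.inr rfl)
  have hjnot : j ∉ fpaN W b i := by
    simp only [fpaN, Finset.mem_filter, Finset.mem_univ, true_and]
    exact hj
  have hins : insert j (fpaN W b i) ⊆ fpaN W (Function.update b i b') i :=
    Finset.insert_subset hjmem hNsub
  have hval : fpaV v W b i + v i j ≤ ∑ j' ∈ fpaN W (Function.update b i b') i, v i j' := by
    have h1 : fpaV v W b i + v i j = ∑ j' ∈ insert j (fpaN W b i), v i j' := by
      rw [Finset.sum_insert hjnot]; unfold fpaV; ring
    rw [h1]
    exact Finset.sum_le_sum_of_subset_of_nonneg hins (fun x _ _ => hv i x)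
  -- bound the payment under the deviation
  have hfilt : (Finset.univ.erase j).filter (fun j' => W b j' = i) = fpaN W b i := by
    ext j'
    simp only [Finset.mem_filter, Finset.mem_erase, Finset.mem_univ, true_and, and_true,
      fpaN]
    constructor
    · rintro ⟨_, h2⟩; exact h2
    · intro h2
      refine ⟨?_, h2⟩
      intro hh; rw [hh] at h2; exact hj h2
  have herase : ∑ j' ∈ Finset.univ.erase j, b' j' = ∑ j' ∈ fpaN W b i, (b i j' + ε) := by
    rw [← hfilt, Finset.sum_filter]
    apply Finset.sum_congr rfl
    intro j' hj'
    have hjne : j' ≠ j := (Finset.mem_erase.1 hj').1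
    simp only [hb', if_neg hjne]
  have hcard : ((fpaN W b i).card : ℝ) ≤ (q : ℝ) := by
    have := Finset.card_le_card (Finset.subset_univ (fpaN W b i))
    simp only [Finset.card_univ, Fintype.card_fin] at this
    exact_mod_cast this
  have hSpend : fpaSpendI W b i ≤ fpaV v W b i :=
    le_trans (hb.2.1 i) (min_le_right _ _)
  have hqε : (q : ℝ) * ε ≤ (v i j - s) / 2 := by
    rw [hε, mul_div_assoc']
    rw [div_le_div_iff₀ (by positivity) (by norm_num)]
    have hq0 : (0:ℝ) ≤ (q:ℝ) := Nat.cast_nonneg q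
    nlinarith [hd.le]
  have hpay : ∑ j' ∈ fpaN W (Function.update b i b') i, b' j' ≤ fpaV v W b i + v i j := by
    calc ∑ j' ∈ fpaN W (Function.update b i b') i, b' j'
        ≤ ∑ j' ∈ Finset.univ, b' j' :=
          Finset.sum_le_sum_of_subset_of_nonneg (Finset.subset_univ _)
            (fun x _ _ => hb'0 x)
      _ = b' j + ∑ j' ∈ Finset.univ.erase j, b' j' :=
          (Finset.add_sum_erase _ _ (Finset.mem_univ j)).symm
      _ = (s + v i j) / 2 + (fpaSpendI W b i + (fpaN W b i).card * ε) := by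
          rw [herase, Finset.sum_add_distrib]
          simp only [hb', if_pos rfl, Finset.sum_const, nsmul_eq_mul]
          rfl
      _ ≤ (s + v i j) / 2 + (fpaV v W b i + (q : ℝ) * ε) := by
          have : ((fpaN W b i).card : ℝ) * ε ≤ (q : ℝ) * ε :=
            mul_le_mul_of_nonneg_right hcard hεpos.le
          linarith
      _ ≤ fpaV v W b i + v i j := by linarith
  rcases hb.2.2 i b' hb'0 with h1 | h2
  · have : fpaV v W b i < fpaV v W b i := by
      have hvj : 0 < v i j := lt_of_le_of_lt hs0 h
      linarith
    exact lt_irrefl _ this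
  · have hmin : fpaV v W b i + v i j ≤
        min (B i) (∑ j' ∈ fpaN W (Function.update b i b') i, v i j') := by
      apply le_min
      · have := hA0 j hj; linarith
      · exact hval
    linarith

/-- for every FPA equilibrium and optimal (fractional) allocation `πs`,
`∑_{i ∈ A_Bbar0} ∑_{j ∉ N(i)} Spend(j) + LW(A_Bbar0) ≥ OPT(A_Bbar0)`. -/
theorem stmt4 (n q : ℕ) (B : Fin n → ℝ) (v : Fin n → Fin q → ℝ)
    (hB : ∀ i, 0 < B i) (hv : ∀ i j, 0 ≤ v i j)
    (W : (Fin n → Fin q → ℝ) → Fin q → Fin n) (hW : IsWinnerRule W)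
    (b : Fin n → Fin q → ℝ) (hb : IsFpaEq B v W b)
    (πs : Fin n → Fin q → ℝ) (hπ : IsAlloc πs)
    (hopt : ∀ π : Fin n → Fin q → ℝ, IsAlloc π → allocLW B v π ≤ allocLW B v πs) :
    ∑ i ∈ Finset.univ.filter (fun i : Fin n => fpaV v W b i < B i ∧
        ∀ j, W b j ≠ i → v i j + fpaV v W b i < B i),
        ((∑ j ∈ Finset.univ.filter (fun j : Fin q => W b j ≠ i), fpaSpendQ W b j)
          + min (B i) (fpaV v W b i))
      ≥ ∑ i ∈ Finset.univ.filter (fun i : Fin n => fpaV v W b i < B i ∧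
          ∀ j, W b j ≠ i → v i j + fpaV v W b i < B i),
          min (B i) (∑ j, πs i j * v i j) := by
  apply Finset.sum_le_sum
  intro i hi
  simp only [Finset.mem_filter, Finset.mem_univ, true_and] at hi
  obtain ⟨hVB, hA0⟩ := hi
  have hkey : ∀ j, W b j ≠ i → v i j ≤ fpaSpendQ W b j :=
    fun j hj => key_le n q B v hv W hW b hb i hA0 j hj
  have hsplit : (∑ j, πs i j * v i j) =
      ∑ j ∈ Finset.univ.filter (fun j => W b j = i), πs i j * v i j +
      ∑ j ∈ Finset.univ.filter (fun j => ¬ W b j = i), πs i j * v i j :=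
    (Finset.sum_filter_add_sum_filter_not Finset.univ _ _).symm
  have h1 : ∑ j ∈ Finset.univ.filter (fun j => W b j = i), πs i j * v i j ≤ fpaV v W b i := by
    unfold fpaV fpaN
    apply Finset.sum_le_sum
    intro j _
    have := mul_le_mul_of_nonneg_right (hπ.2.1 i j) (hv i j)
    linarith [this]
  have h2 : ∑ j ∈ Finset.univ.filter (fun j => ¬ W b j = i), πs i j * v i j ≤
      ∑ j ∈ Finset.univ.filter (fun j : Fin q => W b j ≠ i), fpaSpendQ W b j := by
    apply Finset.sum_le_sum
    intro j hj
    simp only [Finset.mem_filter, Finset.mem_univ, true_and] at hj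
    have hvS := hkey j hj
    have := mul_le_mul_of_nonneg_right (hπ.2.1 i j) (hv i j)
    linarith [this]
  have hminV : min (B i) (fpaV v W b i) = fpaV v W b i := min_eq_right (le_of_lt hVB)
  have hminπ : min (B i) (∑ j, πs i j * v i j) ≤ ∑ j, πs i j * v i j := min_le_right _ _
  rw [hminV]
  linarith
end
end

section
/- For every instance, every deterministic tie-breaking rule, and every FPA equilibrium bid profile, the optimal integral liquid welfare satisfies I-OPT ≤ 2 · LW; i.e., the integral price of anarchy of the first-price auction with both ROS and budget constraints is at most 2. -/
open Finset
open scoped Classical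

noncomputable section

/-- for every instance, tie-breaking rule and FPA equilibrium, `I-OPT ≤ 2 * LW`:
the integral PoA of FPA with ROS and budget constraints is at most 2. -/
theorem stmt5 (n q : ℕ) (B : Fin n → ℝ) (v : Fin n → Fin q → ℝ)
    (hB : ∀ i, 0 < B i) (hv : ∀ i j, 0 ≤ v i j)
    (W : (Fin n → Fin q → ℝ) → Fin q → Fin n) (hW : IsWinnerRule W)
    (b : Fin n → Fin q → ℝ) (hb : IsFpaEq B v W b)
    (IOPT : ℝ)
    (hIOPT : IsGreatest {w : ℝ | ∃ π : Fin n → Fin q → ℝ,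
        IsIntegralAlloc π ∧ w = allocLW B v π} IOPT) :
    IOPT ≤ 2 * fpaLW B v W b := by
  classical
  obtain ⟨⟨π, ⟨⟨hπ0, hπ1, hπsum⟩, hπint⟩, rfl⟩, -⟩ := hIOPT
  obtain ⟨hb0, hbcon, hdev⟩ := hb
  set p : Fin q → ℝ := fpaSpendQ W b with hp
  have hp0 : ∀ j, 0 ≤ p j := fun j => hb0 _ _
  -- total spend is at most the liquid welfare
  have hspend : ∑ j, p j ≤ fpaLW B v W b := by
    have h1 : ∑ j, p j = ∑ i, fpaSpendI W b i := by
      have h2 : ∀ i, fpaSpendI W b i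
          = ∑ j ∈ Finset.univ.filter (fun j => W b j = i), b (W b j) j := by
        intro i
        refine Finset.sum_congr rfl (fun j hj => ?_)
        simp only [fpaN, Finset.mem_filter] at hj
        rw [hj.2]
      rw [eq_comm]
      calc ∑ i, fpaSpendI W b i
          = ∑ i, ∑ j ∈ Finset.univ.filter (fun j => W b j = i), b (W b j) j :=
            Finset.sum_congr rfl (fun i _ => h2 i)
        _ = ∑ j, b (W b j) j :=
            Finset.sum_fiberwise_of_maps_to (fun j _ => Finset.mem_univ (W b j)) _
        _ = ∑ j, p j := rfl
    rw [h1]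
    exact Finset.sum_le_sum (fun i _ => hbcon i)
  -- per-bidder key inequality
  have key : ∀ i, min (B i) (∑ j, π i j * v i j)
      ≤ min (B i) (fpaV v W b i) + ∑ j, π i j * p j := by
    intro i
    set O : Finset (Fin q) := Finset.univ.filter (fun j => π i j = 1) with hO
    have hOv : ∑ j, π i j * v i j = ∑ j ∈ O, v i j := by
      rw [hO, Finset.sum_filter]
      refine Finset.sum_congr rfl (fun j _ => ?_)
      rcases hπint i j with h | h <;> simp [h]
    have hOp : ∑ j, π i j * p j = ∑ j ∈ O, p j := by
      rw [hO, Finset.sum_filter]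
      refine Finset.sum_congr rfl (fun j _ => ?_)
      rcases hπint i j with h | h <;> simp [h]
    rw [hOv, hOp]
    refine le_of_forall_pos_le_add (fun ε hε => ?_)
    set δ : ℝ := ε / (O.card + 1) with hδ
    have hδ0 : 0 < δ := div_pos hε (by positivity)
    set b' : Fin q → ℝ := fun j => if j ∈ O then p j + δ else 0 with hb'
    have hb'0 : ∀ j, 0 ≤ b' j := by
      intro j
      rw [hb']
      dsimp only
      split
      · linarith [hp0 j]
      · exact le_rfl
    set b2 : Fin n → Fin q → ℝ := Function.update b i b' with hb2
    have hwin : ∀ j ∈ O, W b2 j = i := by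
      intro j hj
      by_contra hne
      have h1 : b2 (W b2 j) = b (W b2 j) := Function.update_of_ne hne _ _
      have h2 : b (W b2 j) j ≤ b (W b j) j := hW b j _
      have h3 : b2 i j = p j + δ := by
        rw [hb2, Function.update_self, hb']
        simp [hj]
      have h4 := hW b2 j i
      rw [h3, congrFun h1 j] at h4
      have hpj : p j = b (W b j) j := rfl
      linarith
    have hsub : O ⊆ fpaN W b2 i := by
      intro j hj
      simp [fpaN, hwin j hj]
    have hvmono : ∑ j ∈ O, v i j ≤ ∑ j ∈ fpaN W b2 i, v i j :=
      Finset.sum_le_sum_of_subset_of_nonneg hsub (fun j _ _ => hv i j)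
    have hOp0 : 0 ≤ ∑ j ∈ O, p j := Finset.sum_nonneg (fun j _ => hp0 j)
    have hminBV : 0 ≤ min (B i) (fpaV v W b i) :=
      le_min (hB i).le (Finset.sum_nonneg (fun j _ => hv i j))
    rcases hdev i b' hb'0 with hcase | hcase
    · -- value did not increase
      have h5 : ∑ j ∈ O, v i j ≤ fpaV v W b i := le_trans hvmono hcase
      have h6 : min (B i) (∑ j ∈ O, v i j) ≤ min (B i) (fpaV v W b i) :=
        min_le_min le_rfl h5
      linarith
    · -- constraint would be violated
      have hb'sum : ∑ j ∈ fpaN W b2 i, b' j = ∑ j ∈ O, (p j + δ) := by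
        rw [← Finset.sum_subset hsub (fun j _ hj => by rw [hb']; simp [hj])]
        exact Finset.sum_congr rfl (fun j hj => by rw [hb']; simp [hj])
      have hcard : ∑ j ∈ O, (p j + δ) = ∑ j ∈ O, p j + O.card * δ := by
        rw [Finset.sum_add_distrib, Finset.sum_const, nsmul_eq_mul]
      have hδle : (O.card : ℝ) * δ ≤ ε := by
        rw [hδ]
        rw [mul_comm, div_mul_eq_mul_div, div_le_iff₀ (by positivity : (0:ℝ) < O.card + 1)]
        nlinarith [Nat.cast_nonneg (α := ℝ) O.card]
      have h7 : min (B i) (∑ j ∈ O, v i j)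
          ≤ min (B i) (∑ j ∈ fpaN W b2 i, v i j) := min_le_min le_rfl hvmono
      rw [hb'sum, hcard] at hcase
      linarith
  -- put everything together
  have hsum2 : ∑ i, ∑ j, π i j * p j ≤ ∑ j, p j := by
    rw [Finset.sum_comm]
    refine Finset.sum_le_sum (fun j _ => ?_)
    calc ∑ i, π i j * p j = (∑ i, π i j) * p j := by rw [Finset.sum_mul]
      _ ≤ 1 * p j := mul_le_mul_of_nonneg_right (hπsum j) (hp0 j)
      _ = p j := one_mul _
  calc allocLW B v π = ∑ i, min (B i) (∑ j, π i j * v i j) := rfl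
    _ ≤ ∑ i, (min (B i) (fpaV v W b i) + ∑ j, π i j * p j) :=
        Finset.sum_le_sum (fun i _ => key i)
    _ = fpaLW B v W b + ∑ i, ∑ j, π i j * p j := by
        rw [Finset.sum_add_distrib]; rfl
    _ ≤ 2 * fpaLW B v W b := by linarith
end
end

section
/- For every FPA equilibrium and every integral allocation pi^{I*} achieving I-OPT, it holds that sum_{i in A_Bbar1} sum_{j in O(i) \ N(i)} Spend(j) + LW(A_Bbar1) ≥ I-OPT(A_Bbar1). -/
open Finset
open scoped Classical

noncomputable section

/-!
A bidder `i` whose value `V_i` is below her budget may deviate by outbidding, by some `ε > 0`,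
the current winning bid on every query of `T = N(i) ∪ (O(i) \ N(i))`. She then wins all of `T`,
so her value becomes at least `v i j + V_i ≥ B_i > V_i` for the witness `j`, and the equilibrium
condition forces this deviation to break her budget:
`B_i < Spend(N(i)) + Spend(O(i) \ N(i)) + |T| ε ≤ V_i + Spend(O(i) \ N(i)) + |T| ε`.
Letting `ε → 0` and summing over `A_Bbar1` gives the claim, since `I-OPT` of a bidder is at most `B_i`.
-/

section FirstPriceAuction

variable {n q : ℕ} {B : Fin n → ℝ} {v : Fin n → Fin q → ℝ}
  {W : (Fin n → Fin q → ℝ) → Fin q → Fin n} {b : Fin n → Fin q → ℝ}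

def fpaOutbid (W : (Fin n → Fin q → ℝ) → Fin q → Fin n) (b : Fin n → Fin q → ℝ)
    (T : Finset (Fin q)) (ε : ℝ) (j : Fin q) : ℝ :=
  if j ∈ T then fpaSpendQ W b j + ε else 0

lemma fpaOutbid_nonneg (hb : ∀ i j, 0 ≤ b i j) (T : Finset (Fin q)) {ε : ℝ} (hε : 0 ≤ ε)
    (j : Fin q) : 0 ≤ fpaOutbid W b T ε j := by
  unfold fpaOutbid
  split_ifs
  · exact add_nonneg (hb _ j) hε
  · exact le_rfl

lemma subset_fpaN_update_fpaOutbid (hW : IsWinnerRule W) (i : Fin n) (T : Finset (Fin q))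
    {ε : ℝ} (hε : 0 < ε) : T ⊆ fpaN W (Function.update b i (fpaOutbid W b T ε)) i := by
  intro j hj
  simp only [fpaN, mem_filter, mem_univ, true_and]
  by_contra hne
  set b' := Function.update b i (fpaOutbid W b T ε)
  have h_max : b' i j ≤ b' (W b' j) j := hW b' j i
  have h_other : b' (W b' j) j = b (W b' j) j := by
    simp only [b', Function.update_of_ne hne]
  have h_old : b (W b' j) j ≤ fpaSpendQ W b j := hW b j _
  have h_new : b' i j = fpaSpendQ W b j + ε := by
    simp only [b', Function.update_self, fpaOutbid, if_pos hj]
  linarith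

lemma sum_fpaOutbid_fpaN_update (hW : IsWinnerRule W) (i : Fin n) (T : Finset (Fin q))
    {ε : ℝ} (hε : 0 < ε) :
    ∑ j ∈ fpaN W (Function.update b i (fpaOutbid W b T ε)) i, fpaOutbid W b T ε j
      = ∑ j ∈ T, fpaSpendQ W b j + #T * ε := by
  have hT := subset_fpaN_update_fpaOutbid (b := b) hW i T hε
  simp only [fpaOutbid, sum_ite_mem, inter_eq_right.mpr hT, sum_add_distrib, sum_const,
    nsmul_eq_mul]

lemma fpaSpendI_eq_sum_fpaSpendQ (i : Fin n) :
    fpaSpendI W b i = ∑ j ∈ fpaN W b i, fpaSpendQ W b j := by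
  refine sum_congr rfl fun j hj => ?_
  rw [fpaSpendQ, (mem_filter.mp hj).2]

lemma IsFpaEq.min_le_sum_fpaSpendQ_s6 (hb : IsFpaEq B v W b) (hW : IsWinnerRule W)
    (hv : ∀ i j, 0 ≤ v i j) (i : Fin n) (T : Finset (Fin q))
    (hT : fpaV v W b i < ∑ j ∈ T, v i j) :
    min (B i) (∑ j ∈ T, v i j) ≤ ∑ j ∈ T, fpaSpendQ W b j := by
  have h_approx : ∀ ε > 0, min (B i) (∑ j ∈ T, v i j) < ∑ j ∈ T, fpaSpendQ W b j + #T * ε := by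
    intro ε hε
    have h_won := subset_fpaN_update_fpaOutbid (b := b) hW i T hε
    have h_value : ∑ j ∈ T, v i j ≤
        ∑ j ∈ fpaN W (Function.update b i (fpaOutbid W b T ε)) i, v i j :=
      sum_le_sum_of_subset_of_nonneg h_won fun j _ _ => hv i j
    rcases hb.2.2 i _ (fpaOutbid_nonneg hb.1 T hε.le) with h_no_gain | h_over_budget
    · linarith
    · rw [sum_fpaOutbid_fpaN_update hW i T hε] at h_over_budget
      exact (min_le_min_left _ h_value).trans_lt h_over_budget
  refine le_of_forall_pos_le_add fun δ hδ => ?_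
  have h_card : (0 : ℝ) < #T + 1 := by positivity
  have h_small : (#T : ℝ) * (δ / (#T + 1)) ≤ δ := by
    rw [mul_div_assoc', div_le_iff₀ h_card]
    nlinarith
  linarith [h_approx (δ / (#T + 1)) (by positivity)]

lemma IsFpaEq.le_sum_fpaSpendQ_add_fpaV (hb : IsFpaEq B v W b) (hW : IsWinnerRule W)
    (hv : ∀ i j, 0 ≤ v i j) {i : Fin n} {S : Finset (Fin q)} (hS : ∀ j ∈ S, W b j ≠ i)
    {j₀ : Fin q} (hj₀ : j₀ ∈ S) (hV : fpaV v W b i < B i)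
    (hj₀v : B i ≤ v i j₀ + fpaV v W b i) :
    B i ≤ ∑ j ∈ S, fpaSpendQ W b j + fpaV v W b i := by
  have h_disj : Disjoint (fpaN W b i) S :=
    disjoint_left.mpr fun j hj hjS => hS j hjS (mem_filter.mp hj).2
  have h_value : B i ≤ ∑ j ∈ fpaN W b i ∪ S, v i j := by
    rw [sum_union h_disj]
    have h_single : v i j₀ ≤ ∑ j ∈ S, v i j := single_le_sum (fun j _ => hv i j) hj₀
    unfold fpaV at hj₀v
    linarith
  have h_cost := hb.min_le_sum_fpaSpendQ_s6 hW hv i (fpaN W b i ∪ S) (hV.trans_le h_value)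
  rw [min_eq_left h_value, sum_union h_disj, ← fpaSpendI_eq_sum_fpaSpendQ] at h_cost
  linarith [(hb.2.1 i).trans (min_le_right _ _)]

end FirstPriceAuction

theorem stmt6_general (n q : ℕ) (B : Fin n → ℝ) (v : Fin n → Fin q → ℝ)
    (hv : ∀ i j, 0 ≤ v i j)
    (W : (Fin n → Fin q → ℝ) → Fin q → Fin n) (hW : IsWinnerRule W)
    (b : Fin n → Fin q → ℝ) (hb : IsFpaEq B v W b)
    (πs : Fin n → Fin q → ℝ) :
    ∑ i ∈ Finset.univ.filter (fun i : Fin n => fpaV v W b i < B i ∧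
        ∃ j, πs i j = 1 ∧ W b j ≠ i ∧ B i ≤ v i j + fpaV v W b i),
        ((∑ j ∈ Finset.univ.filter (fun j : Fin q => πs i j = 1 ∧ W b j ≠ i), fpaSpendQ W b j)
          + min (B i) (fpaV v W b i))
      ≥ ∑ i ∈ Finset.univ.filter (fun i : Fin n => fpaV v W b i < B i ∧
          ∃ j, πs i j = 1 ∧ W b j ≠ i ∧ B i ≤ v i j + fpaV v W b i),
          min (B i) (∑ j ∈ Finset.univ.filter (fun j : Fin q => πs i j = 1), v i j) := by
  refine sum_le_sum fun i hi => ?_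
  obtain ⟨hV, j₀, hj₀π, hj₀W, hj₀v⟩ := (mem_filter.mp hi).2
  have h_budget := hb.le_sum_fpaSpendQ_add_fpaV hW hv
    (S := univ.filter fun j => πs i j = 1 ∧ W b j ≠ i) (fun j hj => (mem_filter.mp hj).2.2)
    (mem_filter.mpr ⟨mem_univ j₀, hj₀π, hj₀W⟩) hV hj₀v
  rw [min_eq_right hV.le]
  exact (min_le_left _ _).trans h_budget

/-- for every FPA equilibrium and every integral allocation `πs` achieving `I-OPT`
(with `O(i) = {j : πs i j = 1}`),
`∑_{i ∈ A_Bbar1} ∑_{j ∈ O(i) \ N(i)} Spend(j) + LW(A_Bbar1) ≥ I-OPT(A_Bbar1)`. -/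
theorem stmt6 (n q : ℕ) (B : Fin n → ℝ) (v : Fin n → Fin q → ℝ)
    (hB : ∀ i, 0 < B i) (hv : ∀ i j, 0 ≤ v i j)
    (W : (Fin n → Fin q → ℝ) → Fin q → Fin n) (hW : IsWinnerRule W)
    (b : Fin n → Fin q → ℝ) (hb : IsFpaEq B v W b)
    (πs : Fin n → Fin q → ℝ) (hπ : IsIntegralAlloc πs)
    (hopt : ∀ π : Fin n → Fin q → ℝ, IsIntegralAlloc π → allocLW B v π ≤ allocLW B v πs) :
    ∑ i ∈ Finset.univ.filter (fun i : Fin n => fpaV v W b i < B i ∧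
        ∃ j, πs i j = 1 ∧ W b j ≠ i ∧ B i ≤ v i j + fpaV v W b i),
        ((∑ j ∈ Finset.univ.filter (fun j : Fin q => πs i j = 1 ∧ W b j ≠ i), fpaSpendQ W b j)
          + min (B i) (fpaV v W b i))
      ≥ ∑ i ∈ Finset.univ.filter (fun i : Fin n => fpaV v W b i < B i ∧
          ∃ j, πs i j = 1 ∧ W b j ≠ i ∧ B i ≤ v i j + fpaV v W b i),
          min (B i) (∑ j ∈ Finset.univ.filter (fun j : Fin q => πs i j = 1), v i j) :=
  stmt6_general n q B v hv W hW b hb πs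
end
end

section
/- Suppose v_{i,j} ≤ B_i for every bidder i and every query j. Then for every deterministic tie-breaking rule and every FPA equilibrium bid profile, OPT ≤ 2 · LW; i.e., under this assumption the price of anarchy of the first-price auction with both ROS and budget constraints is at most 2. -/
open Finset
open scoped Classical

noncomputable section

/-!
Let `p j` be the winning bid on query `j`. Since every bidder spends at most their liquid value,
`∑ j, p j ≤ LW`. In equilibrium no bidder `i` can profitably buy a set `T` of queries by bidding
slightly above `p` on it, so `∑ j ∈ T, v i j ≤ V i` or `min (B i) (∑ j ∈ T, v i j) ≤ ∑ j ∈ T, p j`.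
Together with `v i j ≤ B i` this gives, for every fractional allocation `π`,
`min (B i) (∑ j, π i j * v i j) ≤ min (B i) (V i) + ∑ j, π i j * p j`: if it failed, choosing the
queries with `p j < v i j` greedily by increasing `p j / (v i j - p j)` would yield such a
profitable set. Summing over bidders, `OPT ≤ LW + ∑ j, p j ≤ 2 * LW`.
-/

theorem Finset.exists_greedy_cover {ι : Type*} (S : Finset ι) {w u π : ι → ℝ}
    (hw : ∀ j ∈ S, 0 < w j) (hu : ∀ j ∈ S, 0 ≤ u j)
    (hπ0 : ∀ j ∈ S, 0 ≤ π j) (hπ1 : ∀ j ∈ S, π j ≤ 1)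
    {c : ℝ} (hc : 0 ≤ c) (hcS : c < ∑ j ∈ S, π j * w j) :
    ∃ Q k, Q ⊆ S ∧ k ∈ S ∧ k ∉ Q ∧ c < ∑ j ∈ Q, w j + w k ∧
      w k * ∑ j ∈ Q, u j + u k * (∑ j ∈ S, π j * w j - c) ≤ w k * ∑ j ∈ S, π j * u j := by
  induction S using Finset.strongInduction generalizing c with
  | H S ih =>
    have hS : S.Nonempty := nonempty_of_sum_ne_zero (by linarith : ∑ j ∈ S, π j * w j ≠ 0)
    obtain ⟨a, haS, hamin⟩ := S.exists_min_image (fun j => u j / w j) hS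
    have hratio : ∀ j ∈ S, u a * w j ≤ u j * w a := fun j hj =>
      (div_le_div_iff₀ (hw a haS) (hw j hj)).mp (hamin j hj)
    rcases lt_or_ge c (w a) with hca | hca
    · refine ⟨∅, a, empty_subset _, haS, notMem_empty _, by simpa using hca, ?_⟩
      have : u a * ∑ j ∈ S, π j * w j ≤ w a * ∑ j ∈ S, π j * u j := by
        rw [mul_sum, mul_sum]
        exact sum_le_sum fun j hj => by nlinarith [hπ0 j hj, hratio j hj]
      rw [sum_empty, mul_zero, zero_add]
      nlinarith [hu a haS]
    · have hsplit : ∀ f : ι → ℝ, ∑ j ∈ S, f j = f a + ∑ j ∈ S.erase a, f j := fun f =>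
        (add_sum_erase S f haS).symm
      have hπa : π a * w a ≤ w a := mul_le_of_le_one_left (hw a haS).le (hπ1 a haS)
      obtain ⟨Q, k, hQS, hkS, hkQ, hcQ, hcost⟩ :=
        ih (S.erase a) (erase_ssubset haS) (fun j hj => hw j (mem_of_mem_erase hj))
          (fun j hj => hu j (mem_of_mem_erase hj)) (fun j hj => hπ0 j (mem_of_mem_erase hj))
          (fun j hj => hπ1 j (mem_of_mem_erase hj)) (sub_nonneg.mpr hca)
          (by rw [hsplit] at hcS; linarith)
      have haQ : a ∉ Q := fun h => notMem_erase a S (hQS h)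
      have hka : k ≠ a := ne_of_mem_erase hkS
      refine ⟨insert a Q, k, insert_subset haS (hQS.trans (erase_subset a S)),
        mem_of_mem_erase hkS, by simp [hka, hkQ], by rw [sum_insert haQ]; linarith, ?_⟩
      -- taking all of `a` instead of the fraction `π a` is paid for by `a` having the least ratio
      have hexchange : 0 ≤ (1 - π a) * (u k * w a - u a * w k) :=
        mul_nonneg (by linarith [hπ1 a haS]) (by linarith [hratio k (mem_of_mem_erase hkS)])
      rw [sum_insert haQ, hsplit fun j => π j * w j, hsplit fun j => π j * u j]
      nlinarith

theorem min_sum_le_add_sum_of_forall_lt {ι : Type*} (S : Finset ι) {B V : ℝ} {v p π : ι → ℝ}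
    (hV : 0 ≤ V) (hpv : ∀ j ∈ S, p j < v j) (hvB : ∀ j ∈ S, v j ≤ B) (hp : ∀ j ∈ S, 0 ≤ p j)
    (hπ0 : ∀ j ∈ S, 0 ≤ π j) (hπ1 : ∀ j ∈ S, π j ≤ 1)
    (H : ∀ T ⊆ S, ∑ j ∈ T, v j ≤ V ∨ min B (∑ j ∈ T, v j) ≤ ∑ j ∈ T, p j) :
    min B (∑ j ∈ S, π j * v j) ≤ V + ∑ j ∈ S, π j * p j := by
  by_contra! hlt
  have hvV : ∀ k ∈ S, v k ≤ V := fun k hk => by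
    rcases H {k} (singleton_subset_iff.mpr hk) with h | h
    · simpa using h
    · rw [sum_singleton, sum_singleton, min_eq_right (hvB k hk)] at h
      exact absurd h (not_le.mpr (hpv k hk))
  have hcover : V < ∑ j ∈ S, π j * (v j - p j) := by
    simp only [mul_sub, sum_sub_distrib]
    linarith [min_le_right B (∑ j ∈ S, π j * v j)]
  obtain ⟨Q, k, hQS, hkS, hkQ, hVQ, hcost⟩ := S.exists_greedy_cover
    (fun j hj => sub_pos.mpr (hpv j hj)) hp hπ0 hπ1 hV hcover
  have hQp : ∑ j ∈ Q, p j ≤ ∑ j ∈ S, π j * p j := by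
    have : 0 ≤ p k * (∑ j ∈ S, π j * (v j - p j) - V) := mul_nonneg (hp k hkS) (by linarith)
    exact le_of_mul_le_mul_left (by linarith) (sub_pos.mpr (hpv k hkS))
  have hQp0 : 0 ≤ ∑ j ∈ Q, p j := sum_nonneg fun j hj => hp j (hQS hj)
  rw [sum_sub_distrib] at hVQ
  rcases H (insert k Q) (insert_subset hkS hQS) with h | h <;>
    simp only [sum_insert hkQ] at h
  · linarith [hp k hkS]
  · rcases min_le_iff.mp h with h | h
    · linarith [hvV k hkS, hpv k hkS, min_le_left B (∑ j ∈ S, π j * v j)]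
    · linarith

theorem min_sum_le_min_add_sum {ι : Type*} [Fintype ι] {B V : ℝ} {v p π : ι → ℝ}
    (hV : 0 ≤ V) (hvB : ∀ j, v j ≤ B) (hp : ∀ j, 0 ≤ p j)
    (hπ0 : ∀ j, 0 ≤ π j) (hπ1 : ∀ j, π j ≤ 1)
    (H : ∀ T : Finset ι, ∑ j ∈ T, v j ≤ V ∨ min B (∑ j ∈ T, v j) ≤ ∑ j ∈ T, p j) :
    min B (∑ j, π j * v j) ≤ min B V + ∑ j, π j * p j := by
  set S := univ.filter fun j => p j < v j
  set R := univ.filter fun j => ¬p j < v j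
  have hS := min_sum_le_add_sum_of_forall_lt S (π := π) hV (fun j hj => (mem_filter.mp hj).2)
    (fun j _ => hvB j) (fun j _ => hp j) (fun j _ => hπ0 j) (fun j _ => hπ1 j) (fun T _ => H T)
  have hR : ∑ j ∈ R, π j * v j ≤ ∑ j ∈ R, π j * p j :=
    sum_le_sum fun j hj => mul_le_mul_of_nonneg_left (not_lt.mp (mem_filter.mp hj).2) (hπ0 j)
  have hP : 0 ≤ ∑ j, π j * p j := sum_nonneg fun j _ => mul_nonneg (hπ0 j) (hp j)
  have hsplit_v := sum_filter_add_sum_filter_not univ (fun j => p j < v j) fun j => π j * v j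
  have hsplit_p := sum_filter_add_sum_filter_not univ (fun j => p j < v j) fun j => π j * p j
  have hV' : min B (∑ j, π j * v j) ≤ V + ∑ j, π j * p j :=
    calc min B (∑ j, π j * v j)
        ≤ min (B + ∑ j ∈ R, π j * p j) (∑ j ∈ S, π j * v j + ∑ j ∈ R, π j * p j) :=
          min_le_min (le_add_of_nonneg_right (sum_nonneg fun j _ => mul_nonneg (hπ0 j) (hp j)))
            (by rw [← hsplit_v]; linarith)
      _ = min B (∑ j ∈ S, π j * v j) + ∑ j ∈ R, π j * p j := min_add_add_right _ _ _
      _ ≤ V + ∑ j, π j * p j := by rw [← hsplit_p]; linarith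
  rw [← min_add_add_right]
  exact le_min ((min_le_left _ _).trans (le_add_of_nonneg_right hP)) hV'

theorem subset_fpaN_update {n q : ℕ} {W : (Fin n → Fin q → ℝ) → Fin q → Fin n}
    (hW : IsWinnerRule W) (b : Fin n → Fin q → ℝ) (i : Fin n) {b' : Fin q → ℝ}
    {T : Finset (Fin q)} (hT : ∀ j ∈ T, fpaSpendQ W b j < b' j) :
    T ⊆ fpaN W (Function.update b i b') i := by
  intro j hj
  simp only [fpaN, mem_filter, mem_univ, true_and]
  by_contra hne
  have hwin := hW (Function.update b i b') j i
  rw [Function.update_self, Function.update_of_ne hne] at hwin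
  exact (hT j hj).not_ge (hwin.trans (hW b j _))

theorem IsFpaEq.sum_le_fpaV_or_min_le_sum_spendQ {n q : ℕ} {B : Fin n → ℝ}
    {v : Fin n → Fin q → ℝ} {W : (Fin n → Fin q → ℝ) → Fin q → Fin n} {b : Fin n → Fin q → ℝ}
    (hb : IsFpaEq B v W b) (hW : IsWinnerRule W) (hv : ∀ i j, 0 ≤ v i j)
    (i : Fin n) (T : Finset (Fin q)) :
    ∑ j ∈ T, v i j ≤ fpaV v W b i ∨ min (B i) (∑ j ∈ T, v i j) ≤ ∑ j ∈ T, fpaSpendQ W b j := by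
  by_contra! ⟨hV, hm⟩
  have hp : ∀ j, 0 ≤ fpaSpendQ W b j := fun j => hb.1 _ _
  set m := min (B i) (∑ j ∈ T, v i j)
  set P := ∑ j ∈ T, fpaSpendQ W b j
  -- overbid every price on `T` by `δ`, keeping the total overbid below the slack `m - P`
  set δ := (m - P) / (T.card + 1)
  have hδ : 0 < δ := div_pos (by linarith) (by positivity)
  have hδm : P + T.card * δ < m := by
    have : (T.card + 1 : ℝ) * δ = m - P := mul_div_cancel₀ _ (by positivity)
    linarith
  set b' : Fin q → ℝ := fun j => if j ∈ T then fpaSpendQ W b j + δ else 0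
  have hb'0 : ∀ j, 0 ≤ b' j := fun j => by
    simp only [b']
    split_ifs <;> linarith [hp j]
  have hTN := subset_fpaN_update hW b i (T := T) (b' := b') fun j hj => by simp [b', hj, hδ]
  have hvN := sum_le_sum_of_subset_of_nonneg hTN fun j _ _ => hv i j
  have hspend : ∑ j ∈ fpaN W (Function.update b i b') i, b' j ≤ P + T.card * δ :=
    calc ∑ j ∈ fpaN W (Function.update b i b') i, b' j ≤ ∑ j, b' j :=
          sum_le_sum_of_subset_of_nonneg (subset_univ _) fun j _ _ => hb'0 j
      _ = P + T.card * δ := by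
          rw [sum_ite_mem, univ_inter, sum_add_distrib, sum_const, nsmul_eq_mul]
  rcases hb.2.2 i b' hb'0 with h | h
  · linarith
  · linarith [min_le_min_left (B i) hvN]

theorem IsFpaEq.sum_spendQ_le_fpaLW {n q : ℕ} {B : Fin n → ℝ} {v : Fin n → Fin q → ℝ}
    {W : (Fin n → Fin q → ℝ) → Fin q → Fin n} {b : Fin n → Fin q → ℝ}
    (hb : IsFpaEq B v W b) : ∑ j, fpaSpendQ W b j ≤ fpaLW B v W b :=
  calc ∑ j, fpaSpendQ W b j = ∑ i, fpaSpendI W b i := by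
        rw [← sum_fiberwise univ (W b)]
        refine sum_congr rfl fun i _ => sum_congr rfl fun j hj => ?_
        rw [fpaSpendQ, (mem_filter.mp hj).2]
    _ ≤ fpaLW B v W b := sum_le_sum fun i _ => hb.2.1 i

theorem IsAlloc.sum_sum_mul_le {n q : ℕ} {π : Fin n → Fin q → ℝ} (hπ : IsAlloc π)
    {p : Fin q → ℝ} (hp : ∀ j, 0 ≤ p j) : ∑ i, ∑ j, π i j * p j ≤ ∑ j, p j := by
  rw [sum_comm]
  exact sum_le_sum fun j _ => by rw [← sum_mul]; exact mul_le_of_le_one_left (hp j) (hπ.2.2 j)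

theorem stmt8_general (n q : ℕ) (B : Fin n → ℝ) (v : Fin n → Fin q → ℝ)
    (hv : ∀ i j, 0 ≤ v i j)
    (hvB : ∀ i j, v i j ≤ B i)
    (W : (Fin n → Fin q → ℝ) → Fin q → Fin n) (hW : IsWinnerRule W)
    (b : Fin n → Fin q → ℝ) (hb : IsFpaEq B v W b)
    (OPT : ℝ)
    (hOPT : IsGreatest {w : ℝ | ∃ π : Fin n → Fin q → ℝ, IsAlloc π ∧ w = allocLW B v π} OPT) :
    OPT ≤ 2 * fpaLW B v W b := by
  obtain ⟨π, hπ, rfl⟩ := hOPT.1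
  have hp : ∀ j, 0 ≤ fpaSpendQ W b j := fun j => hb.1 _ _
  have hbidder : ∀ i, min (B i) (∑ j, π i j * v i j)
      ≤ min (B i) (fpaV v W b i) + ∑ j, π i j * fpaSpendQ W b j := fun i =>
    min_sum_le_min_add_sum (sum_nonneg fun j _ => hv i j) (hvB i) hp (hπ.1 i) (hπ.2.1 i)
      (hb.sum_le_fpaV_or_min_le_sum_spendQ hW hv i)
  calc allocLW B v π ≤ fpaLW B v W b + ∑ i, ∑ j, π i j * fpaSpendQ W b j := by
        rw [allocLW, fpaLW, ← sum_add_distrib]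
        exact sum_le_sum fun i _ => hbidder i
    _ ≤ fpaLW B v W b + ∑ j, fpaSpendQ W b j := add_le_add_right (hπ.sum_sum_mul_le hp) _
    _ ≤ 2 * fpaLW B v W b := by linarith [hb.sum_spendQ_le_fpaLW]

/-- if `v i j ≤ B i` for all `i, j`, then for every deterministic tie-breaking rule
and every FPA equilibrium, `OPT ≤ 2 * LW`. -/
theorem stmt8 (n q : ℕ) (B : Fin n → ℝ) (v : Fin n → Fin q → ℝ)
    (hB : ∀ i, 0 < B i) (hv : ∀ i j, 0 ≤ v i j)
    (hvB : ∀ i j, v i j ≤ B i)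
    (W : (Fin n → Fin q → ℝ) → Fin q → Fin n) (hW : IsWinnerRule W)
    (b : Fin n → Fin q → ℝ) (hb : IsFpaEq B v W b)
    (OPT : ℝ)
    (hOPT : IsGreatest {w : ℝ | ∃ π : Fin n → Fin q → ℝ, IsAlloc π ∧ w = allocLW B v π} OPT) :
    OPT ≤ 2 * fpaLW B v W b :=
  stmt8_general n q B v hv hvB W hW b hb OPT hOPT
end
end

section
/- In every FPA equilibrium, for every bidder i and every query j such that j ∉ N(i) and Spend(j) < v_{i,j}, it holds that Spend(j) + Spend(i) ≥ B_i. -/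
open Finset
open scoped Classical

noncomputable section

/-- in every FPA equilibrium, for every bidder `i` and query `j ∉ N(i)` with
`Spend(j) < v i j`, one has `Spend(j) + Spend(i) ≥ B i`. -/
theorem stmt9 (n q : ℕ) (B : Fin n → ℝ) (v : Fin n → Fin q → ℝ)
    (hB : ∀ i, 0 < B i) (hv : ∀ i j, 0 ≤ v i j)
    (W : (Fin n → Fin q → ℝ) → Fin q → Fin n) (hW : IsWinnerRule W)
    (b : Fin n → Fin q → ℝ) (hb : IsFpaEq B v W b)
    (i : Fin n) (j : Fin q) (hij : W b j ≠ i) (hsp : fpaSpendQ W b j < v i j) :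
    B i ≤ fpaSpendQ W b j + fpaSpendI W b i := by

  by_contra hcon
  push_neg at hcon
  set S := fpaSpendQ W b j with hSdef
  set P := fpaSpendI W b i with hPdef
  have hS0 : 0 ≤ S := hb.1 _ _
  have hc : 0 < min (B i - (S + P)) (v i j - S) := lt_min (by linarith) (by linarith)
  set δ := min (B i - (S + P)) (v i j - S) / (q + 1) with hδdef
  have hδ : 0 < δ := div_pos hc (by positivity)
  set N := fpaN W b i with hNdef
  have hjN : j ∉ N := by simp [hNdef, fpaN, hij]
  set b' : Fin q → ℝ := fun j' => if j' ∈ N then b i j' + δ else if j' = j then S + δ else 0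
    with hb'def
  have hb'0 : ∀ j', 0 ≤ b' j' := by
    intro j'
    simp only [hb'def]
    split
    · have := hb.1 i j'; linarith
    · split
      · linarith
      · exact le_refl 0
  set bu := Function.update b i b' with hbudef
  have hbu_i : ∀ j', bu i j' = b' j' := fun j' => by simp [hbudef]
  have hbu_k : ∀ k j', k ≠ i → bu k j' = b k j' := by
    intro k j' hk
    simp [hbudef, Function.update_of_ne hk]
  -- i wins all queries in insert j N under bu
  have hwin : ∀ j', j' ∈ insert j N → W bu j' = i := by
    intro j' hj'
    by_contra hk
    have h1 := hW bu j' i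
    have h2 : bu (W bu j') j' = b (W bu j') j' := hbu_k _ _ hk
    have h3 : b (W bu j') j' ≤ b (W b j') j' := hW b j' (W bu j')
    rcases Finset.mem_insert.mp hj' with rfl | hmem
    · have h4 : bu i j' = S + δ := by rw [hbu_i]; simp [hb'def, hjN]
      have key : S + δ ≤ S := by
        calc S + δ = bu i j' := h4.symm
        _ ≤ bu (W bu j') j' := h1
        _ = b (W bu j') j' := h2
        _ ≤ b (W b j') j' := h3
        _ = S := rfl
      linarith
    · have h4 : bu i j' = b i j' + δ := by rw [hbu_i]; simp [hb'def, hmem]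
      have h5 : W b j' = i := by simpa [hNdef, fpaN] using hmem
      have key : b i j' + δ ≤ b i j' := by
        calc b i j' + δ = bu i j' := h4.symm
        _ ≤ bu (W bu j') j' := h1
        _ = b (W bu j') j' := h2
        _ ≤ b (W b j') j' := h3
        _ = b i j' := by rw [h5]
      linarith
  set N' := fpaN W bu i with hN'def
  have hsub : insert j N ⊆ N' := by
    intro j' hj'
    simp only [hN'def, fpaN, Finset.mem_filter, Finset.mem_univ, true_and]
    exact hwin j' hj'
  have hval : fpaV v W b i + v i j ≤ ∑ j' ∈ N', v i j' := by
    have h1 : ∑ j' ∈ insert j N, v i j' = v i j + ∑ j' ∈ N, v i j' :=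
      Finset.sum_insert hjN
    have h2 : ∑ j' ∈ insert j N, v i j' ≤ ∑ j' ∈ N', v i j' :=
      Finset.sum_le_sum_of_subset_of_nonneg hsub (fun _ _ _ => hv i _)
    have h3 : fpaV v W b i = ∑ j' ∈ N, v i j' := rfl
    linarith
  have hspend : ∑ j' ∈ N', b' j' ≤ P + S + q * δ := by
    have h1 : ∑ j' ∈ N', b' j' ≤ ∑ j', b' j' :=
      Finset.sum_le_sum_of_subset_of_nonneg (Finset.subset_univ _) (fun k _ _ => hb'0 k)
    have h2 : ∀ j', b' j' ≤ (if j' ∈ N then b i j' else 0) + (if j' = j then S else 0) + δ := by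
      intro j'
      simp only [hb'def]
      by_cases h : j' ∈ N
      · have : j' ≠ j := fun e => hjN (e ▸ h)
        simp [h, this]
      · by_cases h' : j' = j
        · simp [h', hjN]
        · simp [h, h']
          linarith
    have h3 : ∑ j', b' j' ≤ ∑ j', ((if j' ∈ N then b i j' else 0) + (if j' = j then S else 0) + δ) :=
      Finset.sum_le_sum (fun k _ => h2 k)
    have h4 : ∑ j', ((if j' ∈ N then b i j' else 0) + (if j' = j then S else 0) + δ)
        = P + S + q * δ := by
      rw [Finset.sum_add_distrib, Finset.sum_add_distrib]
      congr 1
      · congr 1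
        · rw [Finset.sum_ite_mem, Finset.univ_inter]; rfl
        · simp
      · simp [Finset.sum_const, mul_comm]
    linarith
  have hqδ : (q : ℝ) * δ < min (B i - (S + P)) (v i j - S) := by
    have : ((q : ℝ) + 1) * δ = min (B i - (S + P)) (v i j - S) := by
      rw [hδdef]; field_simp
    nlinarith
  have hPV : P ≤ fpaV v W b i := le_trans (hb.2.1 i) (min_le_right _ _)
  have hmin1 : min (B i - (S + P)) (v i j - S) ≤ B i - (S + P) := min_le_left _ _
  have hmin2 : min (B i - (S + P)) (v i j - S) ≤ v i j - S := min_le_right _ _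
  rcases hb.2.2 i b' hb'0 with h | h
  · have hNeq : fpaN W (Function.update b i b') i = N' := rfl
    rw [hNeq] at h
    linarith
  · have hNeq : fpaN W (Function.update b i b') i = N' := rfl
    rw [hNeq] at h
    have hlt1 : ∑ j' ∈ N', b' j' < B i := by linarith
    have hlt2 : ∑ j' ∈ N', b' j' < ∑ j' ∈ N', v i j' := by linarith
    have := lt_min hlt1 hlt2
    linarith
end
end

section
/- Suppose v_{i,j} ≤ B_i for every bidder i and every query j. Then in every FPA equilibrium, for every bidder i and every query j such that j ∉ N(i) and Spend(j) < v_{i,j}, it holds that v_{i,j} ≤ V_i. -/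
open Finset
open scoped Classical

noncomputable section

/-! Let bidder `i` deviate to bidding `v i j` on the query `j` and nothing elsewhere. Since this
beats the winning bid on `j`, bidder `i` then wins `j` and pays exactly `v i j`, which is at most
both `B i` and the value of the queries won, so the deviation satisfies both constraints. The
equilibrium condition therefore forces the value after deviating, at least `v i j`, to be at
most `V i`. -/

variable {n q : ℕ}

theorem mem_fpaN {W : (Fin n → Fin q → ℝ) → Fin q → Fin n} {b : Fin n → Fin q → ℝ}
    {i : Fin n} {j : Fin q} : j ∈ fpaN W b i ↔ W b j = i := by
  simp [fpaN]

theorem IsWinnerRule.update_wins_of_spendQ_lt {W : (Fin n → Fin q → ℝ) → Fin q → Fin n}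
    (hW : IsWinnerRule W) (b : Fin n → Fin q → ℝ) (i : Fin n) (b' : Fin q → ℝ) {j : Fin q}
    (h : fpaSpendQ W b j < b' j) : W (Function.update b i b') j = i := by
  by_contra hne
  have hbeaten : b' j ≤ b (W (Function.update b i b') j) j := by
    simpa [Function.update_of_ne hne] using hW (Function.update b i b') j i
  have := hW b j (W (Function.update b i b') j)
  rw [fpaSpendQ] at h
  linarith

theorem IsFpaEq.value_update_le {B : Fin n → ℝ} {v : Fin n → Fin q → ℝ}
    {W : (Fin n → Fin q → ℝ) → Fin q → Fin n} {b : Fin n → Fin q → ℝ} (hb : IsFpaEq B v W b)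
    (i : Fin n) {b' : Fin q → ℝ} (hb'0 : 0 ≤ b')
    (hfeas : ∑ j ∈ fpaN W (Function.update b i b') i, b' j
      ≤ min (B i) (∑ j ∈ fpaN W (Function.update b i b') i, v i j)) :
    ∑ j ∈ fpaN W (Function.update b i b') i, v i j ≤ fpaV v W b i :=
  (hb.2.2 i b' hb'0).resolve_right hfeas.not_gt

theorem stmt10_general (n q : ℕ) (B : Fin n → ℝ) (v : Fin n → Fin q → ℝ)
    (hv : ∀ i j, 0 ≤ v i j)
    (hvB : ∀ i j, v i j ≤ B i)
    (W : (Fin n → Fin q → ℝ) → Fin q → Fin n) (hW : IsWinnerRule W)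
    (b : Fin n → Fin q → ℝ) (hb : IsFpaEq B v W b)
    (i : Fin n) (j : Fin q) (hsp : fpaSpendQ W b j < v i j) :
    v i j ≤ fpaV v W b i := by
  set b' : Fin q → ℝ := Pi.single j (v i j)
  have hb'0 : 0 ≤ b' := Pi.single_nonneg.2 (hv i j)
  have hwin : j ∈ fpaN W (Function.update b i b') i :=
    mem_fpaN.2 (hW.update_wins_of_spendQ_lt b i b' (by simpa [b'] using hsp))
  have hvalue : v i j ≤ ∑ j' ∈ fpaN W (Function.update b i b') i, v i j' :=
    single_le_sum (fun j' _ => hv i j') hwin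
  have hpay : ∑ j' ∈ fpaN W (Function.update b i b') i, b' j' = v i j := by
    simp [b', Finset.sum_pi_single', hwin]
  calc v i j ≤ _ := hvalue
    _ ≤ fpaV v W b i := hb.value_update_le i hb'0 (hpay ▸ le_min (hvB i j) hvalue)

/-- suppose `v i j ≤ B i` for all `i, j`. In every FPA equilibrium, for every
bidder `i` and query `j ∉ N(i)` with `Spend(j) < v i j`, one has `v i j ≤ V i`. -/
theorem stmt10 (n q : ℕ) (B : Fin n → ℝ) (v : Fin n → Fin q → ℝ)
    (hB : ∀ i, 0 < B i) (hv : ∀ i j, 0 ≤ v i j)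
    (hvB : ∀ i j, v i j ≤ B i)
    (W : (Fin n → Fin q → ℝ) → Fin q → Fin n) (hW : IsWinnerRule W)
    (b : Fin n → Fin q → ℝ) (hb : IsFpaEq B v W b)
    (i : Fin n) (j : Fin q) (hij : W b j ≠ i) (hsp : fpaSpendQ W b j < v i j) :
    v i j ≤ fpaV v W b i :=
  stmt10_general n q B v hv hvB W hW b hb i j hsp
end
end

section
/- For every instance with n bidders, every deterministic tie-breaking rule, and every uniform-bidding FPA equilibrium, OPT ≤ n · LW; i.e., under uniform bidding the price of anarchy of the first-price auction with both ROS and budget constraints is at most n. -/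
open Finset
open scoped Classical

noncomputable section

/-- The uniform-bidding bid profile induced by multipliers `m`. -/
def uniformBids {n q : ℕ} (v : Fin n → Fin q → ℝ) (m : Fin n → ℝ) : Fin n → Fin q → ℝ :=
  fun i j => m i * v i j

/-- Uniform-bidding equilibrium of FPA: deviations are restricted to a different multiplier. -/
def IsFpaUniformEq {n q : ℕ} (B : Fin n → ℝ) (v : Fin n → Fin q → ℝ)
    (W : (Fin n → Fin q → ℝ) → Fin q → Fin n) (m : Fin n → ℝ) : Prop :=
  (∀ i, 0 ≤ m i) ∧
  (∀ i, fpaSpendI W (uniformBids v m) i ≤ min (B i) (fpaV v W (uniformBids v m) i)) ∧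
  (∀ i (m' : ℝ), 0 ≤ m' →
    (∑ j ∈ fpaN W (Function.update (uniformBids v m) i (fun j => m' * v i j)) i, v i j
        ≤ fpaV v W (uniformBids v m) i) ∨
    (min (B i) (∑ j ∈ fpaN W (Function.update (uniformBids v m) i (fun j => m' * v i j)) i, v i j)
        < ∑ j ∈ fpaN W (Function.update (uniformBids v m) i (fun j => m' * v i j)) i, m' * v i j))

/-- for every instance with `n` bidders, every deterministic tie-breaking rule and
every uniform-bidding FPA equilibrium, `OPT ≤ n * LW`. -/
theorem stmt12 (n q : ℕ) (B : Fin n → ℝ) (v : Fin n → Fin q → ℝ)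
    (hB : ∀ i, 0 < B i) (hv : ∀ i j, 0 ≤ v i j)
    (W : (Fin n → Fin q → ℝ) → Fin q → Fin n) (hW : IsWinnerRule W)
    (m : Fin n → ℝ) (hm : IsFpaUniformEq B v W m)
    (OPT : ℝ)
    (hOPT : IsGreatest {w : ℝ | ∃ π : Fin n → Fin q → ℝ, IsAlloc π ∧ w = allocLW B v π} OPT) :
    OPT ≤ (n : ℝ) * fpaLW B v W (uniformBids v m) := by
  classical
  obtain ⟨⟨π, hπ, hOPTeq⟩, -⟩ := hOPT
  obtain ⟨hπ0, hπ1, hπsum⟩ := hπ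
  obtain ⟨hm0, hmc, hmdev⟩ := hm
  set b := uniformBids v m with hb
  have hbval : ∀ k j, b k j = m k * v k j := fun k j => by rw [hb]; rfl
  have hbnn : ∀ k j, 0 ≤ b k j := fun k j => by
    rw [hbval]; exact mul_nonneg (hm0 k) (hv k j)
  have hble : ∀ k j, b k j ≤ fpaSpendQ W b j := fun k j => hW b j k
  have hSnn : ∀ j, 0 ≤ fpaSpendQ W b j := fun j => hbnn (W b j) j
  have hVnn : ∀ k, 0 ≤ fpaV v W b k := fun k => Finset.sum_nonneg fun j _ => hv k j
  have hkey : ∀ i : Fin n, min (B i) (∑ j, v i j) ≤ fpaLW B v W b := by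
    intro i
    set T := ∑ j, v i j with hT
    set Vi := fpaV v W b i with hVi
    set P := ∑ j ∈ (fpaN W b i)ᶜ, fpaSpendQ W b j with hP
    have hTnn : 0 ≤ T := Finset.sum_nonneg fun j _ => hv i j
    have hPnn : 0 ≤ P := Finset.sum_nonneg fun j _ => hSnn j
    have hminVnn : 0 ≤ min (B i) Vi := le_min (hB i).le (hVnn i)
    have hViT : Vi ≤ T := by
      rw [hVi, hT, fpaV]
      exact Finset.sum_le_sum_of_subset_of_nonneg (Finset.subset_univ _)
        (fun j _ _ => hv i j)
    have hsplit : Vi + ∑ j ∈ (fpaN W b i)ᶜ, v i j = T :=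
      Finset.sum_add_sum_compl (fpaN W b i) (fun j => v i j)
    -- Step 1 : min (B i) Vi + P ≤ fpaLW
    have hstep1 : min (B i) Vi + P ≤ fpaLW B v W b := by
      have hfib : ∑ k ∈ Finset.univ.erase i,
            ∑ j ∈ Finset.univ.filter (fun j => W b j = k), fpaSpendQ W b j
          = ∑ j ∈ Finset.univ.filter (fun j => W b j ∈ Finset.univ.erase i),
              fpaSpendQ W b j :=
        Finset.sum_fiberwise_eq_sum_filter _ _ _ _
      have hfilc : Finset.univ.filter (fun j => W b j ∈ Finset.univ.erase i)
          = (fpaN W b i)ᶜ := by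
        ext j
        simp [fpaN, Finset.mem_erase]
      have hinner : ∀ k, ∑ j ∈ Finset.univ.filter (fun j => W b j = k),
          fpaSpendQ W b j = fpaSpendI W b k := by
        intro k
        rw [fpaSpendI]
        refine Finset.sum_congr rfl fun j hj => ?_
        have hWj : W b j = k := by
          have := Finset.mem_filter.mp hj
          exact this.2
        rw [fpaSpendQ, hWj]
      have hPsum : P = ∑ k ∈ Finset.univ.erase i, fpaSpendI W b k := by
        rw [hP, ← hfilc, ← hfib]
        exact Finset.sum_congr rfl fun k _ => hinner k
      have hPle : P ≤ ∑ k ∈ Finset.univ.erase i, min (B k) (fpaV v W b k) := by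
        rw [hPsum]
        exact Finset.sum_le_sum fun k _ => hmc k
      have hLWsplit : fpaLW B v W b
          = min (B i) Vi + ∑ k ∈ Finset.univ.erase i, min (B k) (fpaV v W b k) := by
        rw [fpaLW, ← Finset.add_sum_erase _ _ (Finset.mem_univ i)]
      rw [hLWsplit]
      linarith
    -- Step 2 : min (B i) T ≤ min (B i) Vi + P
    have hstep2 : min (B i) T ≤ min (B i) Vi + P := by
      by_cases hT0 : T = 0
      · rw [hT0, min_eq_right (hB i).le]
        linarith
      · have hTpos : 0 < T := lt_of_le_of_ne hTnn (Ne.symm hT0)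
        have hAgg : ∀ m' : ℝ, 0 ≤ m' → m' < 1 → m' * T < B i →
            m' * (T - Vi) ≤ P := by
          intro m' h0 h1 hB'
          have hptw : ∀ j ∈ (fpaN W b i)ᶜ, m' * v i j ≤ fpaSpendQ W b j := by
            intro j hjc
            have hjn : j ∉ fpaN W b i := Finset.mem_compl.mp hjc
            by_cases hcmp : m' ≤ m i
            · calc m' * v i j ≤ m i * v i j :=
                    mul_le_mul_of_nonneg_right hcmp (hv i j)
                _ = b i j := (hbval i j).symm
                _ ≤ fpaSpendQ W b j := hble i j
            · push_neg at hcmp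
              by_contra hgt
              push_neg at hgt
              have hvj : 0 < v i j := by
                by_contra hle
                push_neg at hle
                nlinarith [hSnn j]
              set bu := Function.update b i (fun j' => m' * v i j') with hbu
              have hbu_i : ∀ j', bu i j' = m' * v i j' := fun j' => by
                rw [hbu, Function.update_self]
              have hbu_ne : ∀ k, k ≠ i → ∀ j', bu k j' = b k j' := fun k hk j' => by
                rw [hbu, Function.update_of_ne hk]
              have hWin : ∀ j', (∀ k, k ≠ i → b k j' < m' * v i j') → W bu j' = i := by
                intro j' hlt
                by_contra hne
                have h1' := hW bu j' i
                rw [hbu_i, hbu_ne _ hne] at h1'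
                exact absurd h1' (not_le.mpr (hlt _ hne))
              have hjN' : W bu j = i :=
                hWin j (fun k _ => lt_of_le_of_lt (hble k j) hgt)
              have hSpend_eq : ∀ j' ∈ fpaN W b i, fpaSpendQ W b j' = m i * v i j' := by
                intro j' hj'
                have hWj' : W b j' = i := (Finset.mem_filter.mp hj').2
                rw [fpaSpendQ, hWj', hbval]
              have hsub : insert j ((fpaN W b i).filter (fun j' => 0 < v i j'))
                  ⊆ fpaN W bu i := by
                intro x hx
                rcases Finset.mem_insert.mp hx with rfl | hx
                · exact Finset.mem_filter.mpr ⟨Finset.mem_univ _, hjN'⟩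
                · obtain ⟨hxN, hxv⟩ := Finset.mem_filter.mp hx
                  refine Finset.mem_filter.mpr ⟨Finset.mem_univ _, hWin x ?_⟩
                  intro k hk
                  calc b k x ≤ fpaSpendQ W b x := hble k x
                    _ = m i * v i x := hSpend_eq x hxN
                    _ < m' * v i x := mul_lt_mul_of_pos_right hcmp hxv
              have hjnotin : j ∉ (fpaN W b i).filter (fun j' => 0 < v i j') :=
                fun h => hjn (Finset.mem_filter.mp h).1
              have hVfil : ∑ j' ∈ (fpaN W b i).filter (fun j' => 0 < v i j'), v i j'
                  = Vi := by
                rw [hVi, fpaV]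
                exact Finset.sum_filter_of_ne
                  (fun x _ hne => lt_of_le_of_ne (hv i x) (Ne.symm hne))
              have hgain : v i j + Vi ≤ ∑ j' ∈ fpaN W bu i, v i j' := by
                have hmono := Finset.sum_le_sum_of_subset_of_nonneg hsub
                  (fun x _ _ => hv i x)
                rwa [Finset.sum_insert hjnotin, hVfil] at hmono
              have hdev := hmdev i m' h0
              rw [← hbu] at hdev
              rcases hdev with hc | hc
              · rw [← hVi] at hc
                linarith
              · have hValT : ∑ j' ∈ fpaN W bu i, v i j' ≤ T := by
                  rw [hT]
                  exact Finset.sum_le_sum_of_subset_of_nonneg (Finset.subset_univ _)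
                    (fun x _ _ => hv i x)
                have hValnn : 0 ≤ ∑ j' ∈ fpaN W bu i, v i j' :=
                  Finset.sum_nonneg fun x _ => hv i x
                have hsum_eq : ∑ j' ∈ fpaN W bu i, m' * v i j'
                    = m' * ∑ j' ∈ fpaN W bu i, v i j' := by rw [Finset.mul_sum]
                rw [hsum_eq] at hc
                have h2' : m' * (∑ j' ∈ fpaN W bu i, v i j') ≤ B i := by nlinarith
                have h3' : m' * (∑ j' ∈ fpaN W bu i, v i j')
                    ≤ ∑ j' ∈ fpaN W bu i, v i j' := by nlinarith
                have h4' := le_min h2' h3'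
                linarith
          have hsum' : m' * (T - Vi) = ∑ j ∈ (fpaN W b i)ᶜ, m' * v i j := by
            rw [← Finset.mul_sum]
            congr 1
            linarith
          rw [hsum']
          exact Finset.sum_le_sum hptw
        set θ := min 1 (B i / T) with hθ
        have hθpos : 0 < θ := lt_min one_pos (div_pos (hB i) hTpos)
        have hθ1 : θ ≤ 1 := min_le_left _ _
        have hθB : θ ≤ B i / T := min_le_right _ _
        have hθT : θ * T ≤ B i := (le_div_iff₀ hTpos).mp hθB
        have hD : 0 ≤ T - Vi := by linarith
        have hθD : θ * (T - Vi) ≤ P := by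
          by_contra h
          push_neg at h
          have hDpos : 0 < T - Vi := by
            rcases lt_or_ge 0 (T - Vi) with h' | h'
            · exact h'
            · nlinarith
          have hPD : P / (T - Vi) < θ := (div_lt_iff₀ hDpos).mpr (by linarith)
          have hPDnn : 0 ≤ P / (T - Vi) := div_nonneg hPnn hD
          set m' := (P / (T - Vi) + θ) / 2 with hm'
          have h0' : 0 ≤ m' := by positivity
          have hlt : m' < θ := by rw [hm']; linarith
          have h1' : m' < 1 := lt_of_lt_of_le hlt hθ1
          have hB' : m' * T < B i := by
            have hmθ : m' * T < θ * T := mul_lt_mul_of_pos_right hlt hTpos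
            linarith
          have hAgg' := hAgg m' h0' h1' hB'
          have hcan : P / (T - Vi) * (T - Vi) = P :=
            div_mul_cancel₀ _ (ne_of_gt hDpos)
          have hexp : m' * (T - Vi) = (P / (T - Vi) * (T - Vi) + θ * (T - Vi)) / 2 := by
            rw [hm']; ring
          have : P < m' * (T - Vi) := by rw [hexp, hcan]; linarith
          linarith
        have h1 : min (B i) T ≤ θ * T := by
          rcases le_total (B i / T) 1 with h | h
          · have hθe : θ = B i / T := min_eq_right h
            rw [hθe, div_mul_cancel₀ _ (ne_of_gt hTpos)]
            exact min_le_left _ _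
          · have hθe : θ = 1 := min_eq_left h
            rw [hθe, one_mul]
            exact min_le_right _ _
        have h2 : θ * Vi ≤ min (B i) Vi := by
          refine le_min ?_ ?_
          · nlinarith [hVnn i]
          · nlinarith [hVnn i]
        have hring : θ * T = θ * Vi + θ * (T - Vi) := by ring
        linarith
    linarith
  -- final assembly
  rw [hOPTeq, allocLW]
  calc ∑ i, min (B i) (∑ j, π i j * v i j)
      ≤ ∑ _i : Fin n, fpaLW B v W b := by
        refine Finset.sum_le_sum fun i _ => ?_
        refine le_trans (min_le_min le_rfl ?_) (hkey i)
        exact Finset.sum_le_sum fun j _ => mul_le_of_le_one_left (hv i j) (hπ1 i j)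
    _ = (n : ℝ) * fpaLW B v W b := by
        simp [Finset.sum_const, Finset.card_univ, nsmul_eq_mul]
end
end

section
/- In every uniform-bidding FPA equilibrium, if a bidder i has multiplier m_i > 1, then bidder i obtains no value (V_i = 0), and moreover Spend(j) ≥ v_{i,j} for every query j. -/
open Finset
open scoped Classical

noncomputable section

/-- in every uniform-bidding FPA equilibrium, a bidder `i` with multiplier
`m i > 1` wins no value (`V i = 0`), and `Spend(j) ≥ v i j` for every query `j`. -/
theorem stmt13 (n q : ℕ) (B : Fin n → ℝ) (v : Fin n → Fin q → ℝ)
    (hB : ∀ i, 0 < B i) (hv : ∀ i j, 0 ≤ v i j)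
    (W : (Fin n → Fin q → ℝ) → Fin q → Fin n) (hW : IsWinnerRule W)
    (m : Fin n → ℝ) (hm : IsFpaUniformEq B v W m)
    (i : Fin n) (hmi : 1 < m i) :
    fpaV v W (uniformBids v m) i = 0 ∧
    ∀ j, v i j ≤ fpaSpendQ W (uniformBids v m) j := by
  set b := uniformBids v m with hb
  have hVnn : 0 ≤ fpaV v W b i := Finset.sum_nonneg fun j _ => hv i j
  have hspend : fpaSpendI W b i = m i * fpaV v W b i := by
    simp only [fpaSpendI, fpaV, hb, uniformBids, Finset.mul_sum]
  have hle : fpaSpendI W b i ≤ fpaV v W b i :=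
    (hm.2.1 i).trans (min_le_right _ _)
  rw [hspend] at hle
  have hV0 : fpaV v W b i = 0 := by nlinarith
  refine ⟨hV0, fun j => ?_⟩
  have := hW b j i
  have : m i * v i j ≤ fpaSpendQ W b j := by
    simpa [hb, uniformBids, fpaSpendQ] using hW b j i
  nlinarith [hv i j]
end
end

section
/- In rFPA(alpha) with alpha > 1 and two bidders, consider an undominated bid profile. If bidder i wins query j with probability 1 and the other bidder ibar satisfies V_{ibar} < B_{ibar}, then b_{i,j} ≥ alpha · v_{ibar,j}. -/
open Finset
open scoped Classical

noncomputable section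

/-- Winning probability of a bidder bidding `bi` against an opponent bidding `bo`
in the randomized first-price auction with parameter `α`. -/
def rfpaProb (α bi bo : ℝ) : ℝ :=
  if bi = 0 ∧ bo = 0 then 0
  else if α * bo ≤ bi then 1
  else if α * bi ≤ bo then 0
  else (1 / 2) * (1 + Real.log (bi / bo) / Real.log α)

/-- Probability that bidder `i` wins query `j` in rFPA(α) with two bidders. -/
def rfpaPi {q : ℕ} (α : ℝ) (b : Fin 2 → Fin q → ℝ) (i : Fin 2) (j : Fin q) : ℝ :=
  rfpaProb α (b i j) (b (i + 1) j)

/-- Expected value of bidder `i` in rFPA(α). -/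
def rfpaV {q : ℕ} (α : ℝ) (v b : Fin 2 → Fin q → ℝ) (i : Fin 2) : ℝ :=
  ∑ j, rfpaPi α b i j * v i j

/-- Expected spend of bidder `i` in rFPA(α). -/
def rfpaSpendI {q : ℕ} (α : ℝ) (b : Fin 2 → Fin q → ℝ) (i : Fin 2) : ℝ :=
  ∑ j, rfpaPi α b i j * b i j

/-- Liquid welfare of a bid profile in rFPA(α). -/
def rfpaLW {q : ℕ} (α : ℝ) (B : Fin 2 → ℝ) (v b : Fin 2 → Fin q → ℝ) : ℝ :=
  ∑ i, min (B i) (rfpaV α v b i)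

/-- Undominated (equilibrium) bid profile for rFPA(α) with ROS and budget constraints. -/
def IsRfpaEq {q : ℕ} (α : ℝ) (B : Fin 2 → ℝ) (v b : Fin 2 → Fin q → ℝ) : Prop :=
  (∀ i j, 0 ≤ b i j) ∧
  (∀ i, rfpaSpendI α b i ≤ min (B i) (rfpaV α v b i)) ∧
  (∀ i (b' : Fin q → ℝ), (∀ j, 0 ≤ b' j) →
    rfpaV α v (Function.update b i b') i ≤ rfpaV α v b i ∨
    min (B i) (rfpaV α v (Function.update b i b') i)
      < rfpaSpendI α (Function.update b i b') i)

/-!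
If bidder `i` wins query `j` outright with bid `c` while `c < α v`, where `v` is the other bidder's
value for `j`, the other bidder can add a bid `x` on `j` just above `c / α`. Their winning
probability `p = log (α x / c) / (2 log α)` is then positive but as small as we like, so the extra
value `p v` is positive while the extra spend `p x ≤ p v` fits into the slack `B - V` of their
budget: a profitable deviation, contradicting that the profile is undominated.
-/

theorem sum_eq_sum_add_sub_of_eq_off {ι M : Type*} [Fintype ι] [AddCommGroup M] {f g : ι → M}
    (j : ι) (h : ∀ k, k ≠ j → f k = g k) : ∑ k, f k = ∑ k, g k + (f j - g j) := by
  rw [← Finset.add_sum_erase _ f (mem_univ j), ← Finset.add_sum_erase _ g (mem_univ j),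
    Finset.sum_congr rfl fun k hk => h k (ne_of_mem_erase hk)]
  abel

section rfpaProb

variable {α bi bo : ℝ}

theorem rfpaProb_eq_one (hα : 1 < α) (hbi : 0 ≤ bi) (hbo : 0 ≤ bo) (h : rfpaProb α bi bo = 1) :
    α * bo ≤ bi ∧ 0 < bi := by
  unfold rfpaProb at h
  split_ifs at h with hzero hwin hlose
  · norm_num at h
  · refine ⟨hwin, hbi.lt_of_ne fun hbi0 => hzero ⟨hbi0.symm, ?_⟩⟩
    nlinarith
  · norm_num at h
  · push Not at hwin hlose
    have hbo0 : 0 < bo := by nlinarith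
    have hratio : bi / bo < α := (div_lt_iff₀ hbo0).2 (by linarith)
    have hlog : Real.log (bi / bo) < Real.log α :=
      Real.log_lt_log (div_pos (by nlinarith) hbo0) hratio
    have hlogα : 0 < Real.log α := Real.log_pos hα
    have : Real.log (bi / bo) / Real.log α < 1 := (div_lt_one hlogα).2 hlog
    linarith

theorem rfpaProb_eq_zero_of_mul_le (hα : 1 < α) (hbo : 0 < bo) (h : α * bi ≤ bo) :
    rfpaProb α bi bo = 0 := by
  have hbi : bi < α * bo := by rcases le_or_gt 0 bi with hbi | hbi <;> nlinarith
  rw [rfpaProb, if_neg fun h0 => hbo.ne' h0.2, if_neg hbi.not_ge, if_pos h]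

theorem rfpaProb_mul_div_self (hα : 1 < α) (hbo : 0 < bo) {t : ℝ} (ht₁ : 1 < t)
    (ht₂ : t < α ^ 2) : rfpaProb α (bo * t / α) bo = Real.log t / (2 * Real.log α) := by
  have hα0 : 0 < α := by linarith
  have hlogα : 0 < Real.log α := Real.log_pos hα
  have hwin : ¬α * bo ≤ bo * t / α := by
    rw [le_div_iff₀ hα0]
    nlinarith
  have hlose : ¬α * (bo * t / α) ≤ bo := by
    rw [mul_div_cancel₀ _ hα0.ne']
    nlinarith
  rw [rfpaProb, if_neg fun h0 => hbo.ne' h0.2, if_neg hwin, if_neg hlose,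
    show bo * t / α / bo = t / α by field_simp, Real.log_div (by positivity) hα0.ne']
  field_simp
  ring

theorem exists_rfpaProb_pos_mul_le (hα : 1 < α) (hbo : 0 < bo) {w ε : ℝ} (hw : bo < α * w)
    (hε : 0 < ε) :
    ∃ x, 0 ≤ x ∧ x ≤ w ∧ 0 < rfpaProb α x bo ∧ rfpaProb α x bo * x ≤ ε := by
  have hα0 : 0 < α := by linarith
  have hlogα : 0 < Real.log α := Real.log_pos hα
  set δ := min (α * w / bo - 1) (min (α - 1) (2 * ε * Real.log α / bo))
  have hδ : 0 < δ := lt_min (by rw [sub_pos, one_lt_div hbo]; exact hw)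
    (lt_min (by linarith) (by positivity))
  have hδw : δ ≤ α * w / bo - 1 := min_le_left _ _
  have hδα : δ ≤ α - 1 := (min_le_right _ _).trans (min_le_left _ _)
  have hδε : δ * bo ≤ 2 * ε * Real.log α :=
    (le_div_iff₀ hbo).1 ((min_le_right _ _).trans (min_le_right _ _))
  have hprob := rfpaProb_mul_div_self hα hbo (t := 1 + δ) (by linarith) (by nlinarith)
  have hlogδ : Real.log (1 + δ) ≤ δ := by
    linarith [Real.log_le_sub_one_of_pos (show 0 < 1 + δ by linarith)]
  have hlogδ0 : 0 < Real.log (1 + δ) := Real.log_pos (by linarith)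
  have hxbo : bo * (1 + δ) / α ≤ bo := by
    rw [div_le_iff₀ hα0]
    nlinarith
  refine ⟨bo * (1 + δ) / α, by positivity, ?_, by rw [hprob]; positivity, ?_⟩
  · rw [div_le_iff₀ hα0]
    have := (le_div_iff₀ hbo).1 (show 1 + δ ≤ α * w / bo by linarith)
    linarith
  · calc rfpaProb α (bo * (1 + δ) / α) bo * (bo * (1 + δ) / α)
        ≤ δ / (2 * Real.log α) * bo := by rw [hprob]; gcongr
      _ = δ * bo / (2 * Real.log α) := by ring
      _ ≤ ε := by rw [div_le_iff₀ (by positivity)]; linarith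

end rfpaProb

section update

variable {q : ℕ} {α : ℝ} {v b : Fin 2 → Fin q → ℝ} {k : Fin 2} {j : Fin q} {x : ℝ}

theorem rfpaPi_update_self (b' : Fin q → ℝ) (l : Fin q) :
    rfpaPi α (Function.update b k b') k l = rfpaProb α (b' l) (b (k + 1) l) := by
  have hk : k + 1 ≠ k := by fin_cases k <;> decide
  rw [rfpaPi, Function.update_self, Function.update_of_ne hk]

theorem rfpaPi_update_update_of_ne {l : Fin q} (hl : l ≠ j) :
    rfpaPi α (Function.update b k (Function.update (b k) j x)) k l = rfpaPi α b k l := by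
  rw [rfpaPi_update_self, Function.update_of_ne hl, rfpaPi]

theorem rfpaV_update_update :
    rfpaV α v (Function.update b k (Function.update (b k) j x)) k
      = rfpaV α v b k + (rfpaProb α x (b (k + 1) j) - rfpaPi α b k j) * v k j := by
  unfold rfpaV
  rw [sum_eq_sum_add_sub_of_eq_off j fun l hl => by rw [rfpaPi_update_update_of_ne hl],
    rfpaPi_update_self, Function.update_self]
  ring

theorem rfpaSpendI_update_update :
    rfpaSpendI α (Function.update b k (Function.update (b k) j x)) k
      = rfpaSpendI α b k + (rfpaProb α x (b (k + 1) j) * x - rfpaPi α b k j * b k j) := by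
  unfold rfpaSpendI
  rw [sum_eq_sum_add_sub_of_eq_off j fun l hl => by
      rw [rfpaPi_update_update_of_ne hl, Function.update_self, Function.update_of_ne hl],
    rfpaPi_update_self]
  simp only [Function.update_self]

end update

theorem IsRfpaEq.not_profitable_deviation {q : ℕ} {α : ℝ} {B : Fin 2 → ℝ} {v b : Fin 2 → Fin q → ℝ}
    (hb : IsRfpaEq α B v b) (k : Fin 2) {b' : Fin q → ℝ} (hb' : ∀ l, 0 ≤ b' l)
    (hV : rfpaV α v b k < rfpaV α v (Function.update b k b') k)
    (hS : rfpaSpendI α (Function.update b k b') k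
      ≤ min (B k) (rfpaV α v (Function.update b k b') k)) : False := by
  rcases hb.2.2 k b' hb' with h | h <;> linarith

theorem stmt14_general (q : ℕ) (α : ℝ) (hα : 1 < α) (B : Fin 2 → ℝ) (v b : Fin 2 → Fin q → ℝ)
    (hb : IsRfpaEq α B v b) (i : Fin 2) (j : Fin q)
    (hwin : rfpaPi α b i j = 1) (hV : rfpaV α v b (i + 1) < B (i + 1)) :
    α * v (i + 1) j ≤ b i j := by
  by_contra hlt
  push Not at hlt
  have hnonneg := hb.1
  have hbudget := hb.2.1
  obtain ⟨hopp, hbid⟩ := rfpaProb_eq_one hα (hnonneg _ _) (hnonneg _ _) hwin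
  have hii : i + 1 + 1 = i := by fin_cases i <;> rfl
  have hlose : rfpaPi α b (i + 1) j = 0 := by
    rw [rfpaPi, hii]
    exact rfpaProb_eq_zero_of_mul_le hα hbid hopp
  obtain ⟨x, hx, hxv, hp, hpx⟩ :=
    exists_rfpaProb_pos_mul_le hα hbid hlt (sub_pos.2 hV)
  have hval : 0 < v (i + 1) j := pos_of_mul_pos_right (hbid.trans hlt) (by linarith)
  have hspend := (hbudget (i + 1)).trans (min_le_right _ _)
  refine hb.not_profitable_deviation (i + 1) (b' := Function.update (b (i + 1)) j x) ?_ ?_ ?_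
  · exact le_update_iff.2 ⟨hx, fun l _ => hnonneg _ l⟩
  · rw [rfpaV_update_update, hlose, hii]
    nlinarith
  · rw [rfpaSpendI_update_update, rfpaV_update_update, hlose, hii]
    refine le_min (by linarith) ?_
    nlinarith

/-- in rFPA(α) with `α > 1` and two bidders, in every undominated bid profile,
if bidder `i` wins query `j` with probability 1 and the other bidder `i+1` has `V < B`,
then `b i j ≥ α * v (i+1) j`. -/
theorem stmt14 (q : ℕ) (α : ℝ) (hα : 1 < α) (B : Fin 2 → ℝ) (v b : Fin 2 → Fin q → ℝ)
    (hB : ∀ i, 0 < B i) (hv : ∀ i j, 0 ≤ v i j)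
    (hb : IsRfpaEq α B v b) (i : Fin 2) (j : Fin q)
    (hwin : rfpaPi α b i j = 1) (hV : rfpaV α v b (i + 1) < B (i + 1)) :
    α * v (i + 1) j ≤ b i j :=
  stmt14_general q α hα B v b hb i j hwin hV
end
end

section
/- Consider the quasi-proportional first-price auction with parameter alpha ≥ 1 and n bidders at an equilibrium bid profile. Fix a bidder i with V_i < B_i and a query j with v_{i,j} > 0, and suppose 0 < pi_{i,j} ≤ eta for some eta in (0,1). Then Spend(j) ≥ v_{i,j} · alpha · (1 − eta) / ((n · eta)^{1/alpha} · (alpha − alpha·eta + 1)). -/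
/-!
Write `β = b i j` and `π` for bidder `i`'s probability of winning query `j`. Because `V i < B i`,
raising `β` slightly must not be a profitable deviation; the surplus `π (v i j - β)` of query `j`
therefore cannot have positive derivative in `β`, which is the first-order condition
`α (1 - π) (v i j - β) ≤ β`, hence `β ≥ α (1 - η) v i j / (α (1 - η) + 1)`.
On the other hand `Spend(j) = ∑ b^(α+1) / ∑ b^α` dominates the power mean `(∑ b^α / n)^(1/α)`
(Jensen for `t ↦ t ^ ((α + 1) / α)`), and `∑ b^α = β^α / π`, so `Spend(j) ≥ β / (n π)^(1/α)`.
-/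

open Finset
open scoped Classical

noncomputable section

/-- Probability that bidder `i` wins query `j` in the quasi-proportional FPA with parameter `α`. -/
def qpPi {n q : ℕ} (α : ℝ) (b : Fin n → Fin q → ℝ) (i : Fin n) (j : Fin q) : ℝ :=
  if ∀ i', b i' j = 0 then 0
  else b i j ^ α / ∑ i', b i' j ^ α

/-- Expected value of bidder `i`. -/
def qpV {n q : ℕ} (α : ℝ) (v b : Fin n → Fin q → ℝ) (i : Fin n) : ℝ :=
  ∑ j, qpPi α b i j * v i j

/-- Expected spend on query `j`. -/
def qpSpendQ {n q : ℕ} (α : ℝ) (b : Fin n → Fin q → ℝ) (j : Fin q) : ℝ :=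
  ∑ i, qpPi α b i j * b i j

/-- Expected spend of bidder `i`. -/
def qpSpendI {n q : ℕ} (α : ℝ) (b : Fin n → Fin q → ℝ) (i : Fin n) : ℝ :=
  ∑ j, qpPi α b i j * b i j

/-- Liquid welfare of a bid profile in the quasi-proportional FPA. -/
def qpLW {n q : ℕ} (α : ℝ) (B : Fin n → ℝ) (v b : Fin n → Fin q → ℝ) : ℝ :=
  ∑ i, min (B i) (qpV α v b i)

/-- Equilibrium bid profile for the quasi-proportional FPA with ROS and budget constraints. -/
def IsQpEq {n q : ℕ} (α : ℝ) (B : Fin n → ℝ) (v b : Fin n → Fin q → ℝ) : Prop :=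
  (∀ i j, 0 ≤ b i j) ∧
  (∀ i, qpSpendI α b i ≤ min (B i) (qpV α v b i)) ∧
  (∀ i (b' : Fin q → ℝ), (∀ j, 0 ≤ b' j) →
    qpV α v (Function.update b i b') i ≤ qpV α v b i ∨
    min (B i) (qpV α v (Function.update b i b') i)
      < qpSpendI α (Function.update b i b') i)

theorem rpow_mean_rpow_one_div_le_sum_rpow_mul_div {ι : Type*} [Fintype ι] {α : ℝ} (hα : 0 < α)
    {c : ι → ℝ} (hc : ∀ i, 0 ≤ c i) (hS : 0 < ∑ i, c i ^ α) :
    ((∑ i, c i ^ α) / Fintype.card ι) ^ (1 / α) ≤ (∑ i, c i ^ α * c i) / ∑ i, c i ^ α := by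
  set S := ∑ i, c i ^ α
  set N : ℝ := (Fintype.card ι : ℝ)
  have hN : 0 < N := by
    have : Nonempty ι := by
      by_contra h
      simp [S, not_nonempty_iff.mp h] at hS
    exact Nat.cast_pos.mpr Fintype.card_pos
  have hSN : 0 < S / N := div_pos hS hN
  -- Jensen for `t ↦ t ^ ((α + 1) / α)` applied to the values `c i ^ α`
  have hJensen := Real.rpow_arith_mean_le_arith_mean_rpow univ (fun _ => N⁻¹) (fun i => c i ^ α)
    (fun _ _ => by positivity) (by simp [N, hN.ne']) (fun i _ => Real.rpow_nonneg (hc i) α)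
    (p := 1 / α + 1) (by simp [hα.le])
  have hpow : ∀ i, (c i ^ α) ^ (1 / α + 1) = c i ^ α * c i := fun i => by
    rw [← Real.rpow_mul (hc i), mul_add, mul_one_div_cancel hα.ne', mul_one, add_comm,
      Real.rpow_add_one' (hc i) (by positivity), mul_comm]
  simp only [hpow] at hJensen
  rw [← mul_sum, ← mul_sum, inv_mul_eq_div, inv_mul_eq_div] at hJensen
  rw [Real.rpow_add hSN, Real.rpow_one] at hJensen
  rw [le_div_iff₀ hS]
  calc (S / N) ^ (1 / α) * S = (S / N) ^ (1 / α) * (S / N) * N := by field_simp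
    _ ≤ (∑ i, c i ^ α * c i) / N * N := by gcongr
    _ = ∑ i, c i ^ α * c i := by field_simp

theorem HasDerivAt.eventually_lt_of_deriv_pos {f : ℝ → ℝ} {f' a : ℝ} (hf : HasDerivAt f f' a)
    (hf' : 0 < f') : ∀ᶠ x in nhdsWithin a (Set.Ioi a), f a < f x := by
  have hslope := (hasDerivAt_iff_tendsto_slope.mp hf).eventually (eventually_gt_nhds hf')
  filter_upwards [hslope.filter_mono (nhdsGT_le_nhdsNE a), self_mem_nhdsWithin] with x hs hx
  exact (slope_pos_iff hx).mp hs

/-- The probability of winning with bid `x` against competing bids whose `α`-th powers sum to `T`. -/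
def winShare (α T x : ℝ) : ℝ := x ^ α / (x ^ α + T)

section winShare

variable {α T x y : ℝ}

theorem one_sub_winShare (hx : 0 < x) (hT : 0 ≤ T) : 1 - winShare α T x = T / (x ^ α + T) := by
  have : 0 < x ^ α + T := by positivity
  rw [winShare]
  field_simp
  ring

theorem winShare_lt_winShare (hα : 0 < α) (hT : 0 < T) (hx : 0 < x) (hxy : x < y) :
    winShare α T x < winShare α T y := by
  have hxα : x ^ α < y ^ α := Real.rpow_lt_rpow hx.le hxy hα
  have : 0 < x ^ α := by positivity
  rw [winShare, winShare, div_lt_div_iff₀ (by positivity) (by linarith)]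
  nlinarith

theorem hasDerivAt_winShare (hx : 0 < x) (hT : 0 ≤ T) :
    HasDerivAt (winShare α T) (α * x ^ (α - 1) * T / (x ^ α + T) ^ 2) x := by
  have hpow : HasDerivAt (fun y : ℝ => y ^ α) (α * x ^ (α - 1)) x :=
    Real.hasDerivAt_rpow_const (Or.inl hx.ne')
  exact (hpow.div (hpow.add_const T) (by positivity)).congr_deriv (by ring)

/-- `hfoc` says that the surplus `y ↦ winShare α T y * (w - y)` has positive derivative at `x`. -/
theorem exists_gt_winShare_surplus_lt (hx : 0 < x) (hT : 0 ≤ T) {w : ℝ}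
    (hfoc : x * (x ^ α + T) < α * (w - x) * T) {ε : ℝ} (hε : 0 < ε) :
    ∃ y, x < y ∧ winShare α T x * (w - x) < winShare α T y * (w - y) ∧
      winShare α T y < winShare α T x + ε := by
  have hden : 0 < x ^ α + T := by positivity
  have hderiv := (hasDerivAt_winShare (α := α) hx hT).mul ((hasDerivAt_id x).const_sub w)
  have hpos : 0 < α * x ^ (α - 1) * T / (x ^ α + T) ^ 2 * (w - id x)
      + winShare α T x * (-1) := by
    have hsplit : x ^ α = x ^ (α - 1) * x := by
      rw [← Real.rpow_add_one hx.ne', sub_add_cancel]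
    have : α * x ^ (α - 1) * T / (x ^ α + T) ^ 2 * (w - id x) + winShare α T x * (-1)
        = x ^ (α - 1) / (x ^ α + T) ^ 2 * (α * (w - x) * T - x * (x ^ α + T)) := by
      rw [winShare, id]
      field_simp
      rw [hsplit]
      ring
    rw [this]
    exact mul_pos (by positivity) (by linarith)
  have hcont : ContinuousAt (winShare α T) x := (hasDerivAt_winShare hx hT).continuousAt
  have hnear : ∀ᶠ y in nhdsWithin x (Set.Ioi x), winShare α T y < winShare α T x + ε :=
    (hcont.eventually (eventually_lt_nhds (lt_add_of_pos_right _ hε))).filter_mono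
      nhdsWithin_le_nhds
  obtain ⟨y, hgain, hclose, hxy⟩ :=
    ((hderiv.eventually_lt_of_deriv_pos hpos).and (hnear.and self_mem_nhdsWithin)).exists
  exact ⟨y, hxy, hgain, hclose⟩

end winShare

theorem Fintype.sum_eq_sum_add_sub_of_forall_ne {ι M : Type*} [Fintype ι] [AddCommGroup M]
    {f g : ι → M} (j : ι) (h : ∀ k ≠ j, f k = g k) : ∑ k, f k = ∑ k, g k + (f j - g j) := by
  rw [← sub_eq_iff_eq_add', ← sum_sub_distrib]
  exact Fintype.sum_eq_single j fun k hk => sub_eq_zero.mpr (h k hk)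

def setBid {n q : ℕ} (b : Fin n → Fin q → ℝ) (i : Fin n) (j : Fin q) (x : ℝ) :
    Fin n → Fin q → ℝ :=
  Function.update b i (Function.update (b i) j x)

section QuasiProportional

variable {n q : ℕ} {α : ℝ} {B : Fin n → ℝ} {v b : Fin n → Fin q → ℝ} {i i' : Fin n}
  {j j' : Fin q} {x : ℝ}

theorem setBid_of_ne_query (h : j' ≠ j) : setBid b i j x i' j' = b i' j' := by
  by_cases hi : i' = i
  · subst hi; simp [setBid, h]
  · simp [setBid, hi]

theorem setBid_of_ne_bidder (h : i' ≠ i) : setBid b i j x i' j' = b i' j' := by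
  simp [setBid, h]

theorem setBid_self : setBid b i j x i j = x := by
  simp [setBid]

theorem qpPi_eq_div (hα : α ≠ 0) :
    qpPi α b i j = b i j ^ α / ∑ i', b i' j ^ α := by
  by_cases h : ∀ i', b i' j = 0
  · simp [qpPi, h, Real.zero_rpow hα]
  · rw [qpPi, if_neg h]

theorem qpPi_eq_winShare (hα : α ≠ 0) :
    qpPi α b i j = winShare α (∑ i' ∈ univ.erase i, b i' j ^ α) (b i j) := by
  rw [qpPi_eq_div hα, winShare, add_sum_erase _ (fun i' => b i' j ^ α) (mem_univ i)]

theorem qpSpendQ_eq_div (hα : α ≠ 0) :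
    qpSpendQ α b j = (∑ i, b i j ^ α * b i j) / ∑ i, b i j ^ α := by
  simp only [qpSpendQ, qpPi_eq_div hα, sum_div, div_mul_eq_mul_div]

theorem qpPi_setBid_of_ne_query (h : j' ≠ j) :
    qpPi α (setBid b i j x) i' j' = qpPi α b i' j' := by
  simp only [qpPi, setBid_of_ne_query h]

theorem qpPi_setBid_self (hα : α ≠ 0) :
    qpPi α (setBid b i j x) i j = winShare α (∑ i' ∈ univ.erase i, b i' j ^ α) x := by
  rw [qpPi_eq_winShare hα, setBid_self]
  congr 1
  exact sum_congr rfl fun i' hi' => by rw [setBid_of_ne_bidder (ne_of_mem_erase hi')]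

theorem qpV_setBid : qpV α v (setBid b i j x) i =
    qpV α v b i + (qpPi α (setBid b i j x) i j - qpPi α b i j) * v i j := by
  rw [qpV, qpV, Fintype.sum_eq_sum_add_sub_of_forall_ne j fun j' hj' => by
    rw [qpPi_setBid_of_ne_query hj']]
  ring

theorem qpSpendI_setBid : qpSpendI α (setBid b i j x) i =
    qpSpendI α b i + (qpPi α (setBid b i j x) i j * x - qpPi α b i j * b i j) := by
  rw [qpSpendI, qpSpendI, Fintype.sum_eq_sum_add_sub_of_forall_ne j fun j' hj' => by
    rw [qpPi_setBid_of_ne_query hj', setBid_of_ne_query hj'], setBid_self]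

/-- The first-order condition: otherwise a slight raise of the bid on `j` would increase `i`'s
value while keeping the spend within both value and budget. -/
theorem IsQpEq.mul_one_sub_qpPi_mul_sub_le (hα : 0 < α) (hb : IsQpEq α B v b)
    (hVB : qpV α v b i < B i) (hpi : 0 < qpPi α b i j) :
    α * (1 - qpPi α b i j) * (v i j - b i j) ≤ b i j := by
  obtain ⟨hbnn, hROS, hdev⟩ := hb
  set T := ∑ i' ∈ univ.erase i, b i' j ^ α
  have hTnn : 0 ≤ T := sum_nonneg fun i' _ => Real.rpow_nonneg (hbnn i' j) α
  have hπ : qpPi α b i j = winShare α T (b i j) := qpPi_eq_winShare hα.ne'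
  have hβ : 0 < b i j := by
    refine (hbnn i j).lt_of_ne' fun h0 => ?_
    rw [hπ, h0, winShare, Real.zero_rpow hα.ne', zero_div] at hpi
    exact hpi.false
  by_contra! hlt
  rw [hπ, one_sub_winShare hβ hTnn] at hlt
  have hfoc : b i j * (b i j ^ α + T) < α * (v i j - b i j) * T := by
    have hden : 0 < b i j ^ α + T := by positivity
    calc b i j * (b i j ^ α + T)
        < α * (T / (b i j ^ α + T)) * (v i j - b i j) * (b i j ^ α + T) := by gcongr
      _ = α * (v i j - b i j) * T := by field_simp
  have hgain : 0 < α * (v i j - b i j) * T := lt_trans (by positivity) hfoc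
  have hvβ : b i j < v i j := by
    by_contra! h
    exact hgain.not_ge (mul_nonpos_of_nonpos_of_nonneg
      (mul_nonpos_of_nonneg_of_nonpos hα.le (sub_nonpos.mpr h)) hTnn)
  have hTpos : 0 < T := pos_of_mul_pos_right hgain (mul_pos hα (sub_pos.mpr hvβ)).le
  have hv : 0 < v i j := hβ.trans hvβ
  obtain ⟨x, hβx, hsurplus, hclose⟩ :=
    exists_gt_winShare_surplus_lt hβ hTnn hfoc (div_pos (sub_pos.mpr hVB) hv)
  have hmore : winShare α T (b i j) < winShare α T x := winShare_lt_winShare hα hTpos hβ hβx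
  have hV' : qpV α v (setBid b i j x) i =
      qpV α v b i + (winShare α T x - winShare α T (b i j)) * v i j := by
    rw [qpV_setBid, qpPi_setBid_self hα.ne', hπ]
  have hS' : qpSpendI α (setBid b i j x) i =
      qpSpendI α b i + (winShare α T x * x - winShare α T (b i j) * b i j) := by
    rw [qpSpendI_setBid, qpPi_setBid_self hα.ne', hπ]
  have hSV : qpSpendI α b i ≤ qpV α v b i := (hROS i).trans (min_le_right _ _)
  have hx_nonneg : ∀ j', 0 ≤ Function.update (b i) j x j' := fun j' => by
    rcases eq_or_ne j' j with rfl | hj'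
    · simpa using (hβ.trans hβx).le
    · simpa [hj'] using hbnn i j'
  rcases hdev i (Function.update (b i) j x) hx_nonneg with hle | hlt'
  · change qpV α v (setBid b i j x) i ≤ qpV α v b i at hle
    rw [hV'] at hle
    nlinarith
  · change min (B i) (qpV α v (setBid b i j x) i) < qpSpendI α (setBid b i j x) i at hlt'
    have hV'B : qpV α v (setBid b i j x) i ≤ B i := by
      rw [hV']
      calc qpV α v b i + (winShare α T x - winShare α T (b i j)) * v i j
          ≤ qpV α v b i + (B i - qpV α v b i) / v i j * v i j := by gcongr; linarith
        _ = B i := by field_simp; ring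
    rw [min_eq_right hV'B, hV', hS'] at hlt'
    linarith

theorem div_rpow_le_qpSpendQ (hα : 0 < α) (hbnn : ∀ i j, 0 ≤ b i j) (hpi : 0 < qpPi α b i j) :
    b i j / (n * qpPi α b i j) ^ (1 / α) ≤ qpSpendQ α b j := by
  set S := ∑ i', b i' j ^ α
  have hπ : qpPi α b i j = b i j ^ α / S := qpPi_eq_div hα.ne'
  obtain ⟨hβα, hS⟩ : 0 < b i j ^ α ∧ 0 < S := by
    rw [hπ] at hpi
    refine (div_pos_iff.mp hpi).resolve_right fun h => ?_
    exact (Real.rpow_nonneg (hbnn i j) α).not_gt h.1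
  have hmean := rpow_mean_rpow_one_div_le_sum_rpow_mul_div hα (fun i' => hbnn i' j) hS
  rw [Fintype.card_fin, ← qpSpendQ_eq_div hα.ne'] at hmean
  have hSn : S / n = b i j ^ α / (n * qpPi α b i j) := by
    rw [hπ]
    field_simp
  rwa [hSn, Real.div_rpow hβα.le (by positivity), ← Real.rpow_mul (hbnn i j),
    mul_one_div_cancel hα.ne', Real.rpow_one] at hmean

end QuasiProportional

theorem stmt18_general (n q : ℕ) (α : ℝ) (hα : 1 ≤ α) (B : Fin n → ℝ) (v b : Fin n → Fin q → ℝ)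
    (hb : IsQpEq α B v b) (i : Fin n) (j : Fin q)
    (hVB : qpV α v b i < B i)
    (η : ℝ) (hη1 : η < 1)
    (hpi0 : 0 < qpPi α b i j) (hpiη : qpPi α b i j ≤ η) :
    v i j * (α * (1 - η)) / (((n : ℝ) * η) ^ (1 / α) * (α - α * η + 1))
      ≤ qpSpendQ α b j := by
  have hα0 : 0 < α := by linarith
  have hη0 : 0 < η := hpi0.trans_le hpiη
  have hfoc := hb.mul_one_sub_qpPi_mul_sub_le hα0 hVB hpi0
  have hbid : α * (1 - η) * v i j / (α * (1 - η) + 1) ≤ b i j := by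
    rw [div_le_iff₀ (by nlinarith)]
    rcases le_total (v i j) (b i j) with h | h
    · nlinarith [hb.1 i j]
    · nlinarith [mul_le_mul_of_nonneg_right hpiη (mul_nonneg hα0.le (sub_nonneg.mpr h))]
  calc v i j * (α * (1 - η)) / (((n : ℝ) * η) ^ (1 / α) * (α - α * η + 1))
      = α * (1 - η) * v i j / (α * (1 - η) + 1) / ((n : ℝ) * η) ^ (1 / α) := by
        rw [div_div, mul_comm (((n : ℝ) * η) ^ (1 / α))]
        ring_nf
    _ ≤ b i j / ((n : ℝ) * η) ^ (1 / α) := by gcongr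
    _ ≤ b i j / ((n : ℝ) * qpPi α b i j) ^ (1 / α) := by
        have : (0 : ℝ) < n := by exact_mod_cast i.pos
        gcongr
        exact hb.1 i j
    _ ≤ qpSpendQ α b j := div_rpow_le_qpSpendQ hα0 hb.1 hpi0

/-- in the quasi-proportional FPA with parameter `α ≥ 1`, at equilibrium,
for a bidder `i` with `V i < B i` and a query `j` with `v i j > 0` and `0 < π i j ≤ η < 1`,
`Spend(j) ≥ v i j * α (1 - η) / ((n η)^{1/α} (α - α η + 1))`. -/
theorem stmt18 (n q : ℕ) (α : ℝ) (hα : 1 ≤ α) (B : Fin n → ℝ) (v b : Fin n → Fin q → ℝ)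
    (hB : ∀ i, 0 < B i) (hv : ∀ i j, 0 ≤ v i j)
    (hb : IsQpEq α B v b) (i : Fin n) (j : Fin q)
    (hVB : qpV α v b i < B i) (hvj : 0 < v i j)
    (η : ℝ) (hη0 : 0 < η) (hη1 : η < 1)
    (hpi0 : 0 < qpPi α b i j) (hpiη : qpPi α b i j ≤ η) :
    v i j * (α * (1 - η)) / (((n : ℝ) * η) ^ (1 / α) * (α - α * η + 1))
      ≤ qpSpendQ α b j :=
  stmt18_general n q α hα B v b hb i j hVB η hη1 hpi0 hpiη
end
end
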